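/- arXiv:2407.09798 — 9 statements merged into one kernel-verified Lean document; each statement's English description precedes it below -/
import Mathlib

section
/- Every M♮-convex family satisfies the augmentation property: if X, Y belong to the family and |X| < |Y|, then there exists y ∈ Y \ X such that X + y belongs to the family. -/
/-- `J` is an M♮-convex family: it is nonempty, and for any `X, Y ∈ J` and `x ∈ X \ Y`,
either (i) `X - x ∈ J` and `Y + x ∈ J`, or (ii) there exists `y ∈ Y \ X` with
`X - x + y ∈ J` and `Y + x - y ∈ J`. -/
def MnatConvex {α : Type*} [DecidableEq α] (J : Set (Finset α)) : Prop :=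
  J.Nonempty ∧
    ∀ X ∈ J, ∀ Y ∈ J, ∀ x ∈ X \ Y,
      (X.erase x ∈ J ∧ insert x Y ∈ J) ∨
        ∃ y ∈ Y \ X, insert y (X.erase x) ∈ J ∧ (insert x Y).erase y ∈ J

/-- Every M♮-convex family satisfies the augmentation property. -/
theorem stmt_1 {α : Type*} [DecidableEq α] (J : Set (Finset α)) (hJ : MnatConvex J)
    (X Y : Finset α) (hX : X ∈ J) (hY : Y ∈ J) (h : X.card < Y.card) :
    ∃ y ∈ Y \ X, insert y X ∈ J := by
  obtain ⟨-, hex⟩ := hJ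
  suffices H : ∀ n (Y : Finset α), Y ∈ J → X.card < Y.card → (Y \ X).card = n →
      ∃ y ∈ Y \ X, insert y X ∈ J from H _ Y hY h rfl
  intro n
  induction n using Nat.strong_induction_on with
  | _ n IH =>
  intro Y hY h hn
  have hne : (Y \ X).Nonempty := by
    rw [Finset.sdiff_nonempty]
    intro hsub
    exact absurd (Finset.card_le_card hsub) (not_le.mpr h)
  obtain ⟨x, hx⟩ := hne
  have hxY : x ∈ Y := (Finset.mem_sdiff.mp hx).1
  have hxX : x ∉ X := (Finset.mem_sdiff.mp hx).2
  obtain h1 | ⟨y, hy, h2, h3⟩ := hex Y hY X hX x (by simp [Finset.mem_sdiff, hxY, hxX])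
  · exact ⟨x, hx, h1.2⟩
  · have hyX : y ∈ X := (Finset.mem_sdiff.mp hy).1
    have hyY : y ∉ Y := (Finset.mem_sdiff.mp hy).2
    set Y2 := insert y (Y.erase x) with hY2
    have hcard : Y2.card = Y.card := by
      rw [hY2, Finset.card_insert_of_notMem (by simp [hyY]),
        Finset.card_erase_of_mem hxY,
        Nat.sub_add_cancel (Finset.card_pos.mpr ⟨x, hxY⟩)]
    have hsd : Y2 \ X = (Y \ X).erase x := by
      ext z
      simp only [hY2, Finset.mem_sdiff, Finset.mem_erase, Finset.mem_insert]
      constructor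
      · rintro ⟨(rfl | ⟨hzx, hzY⟩), hzX⟩
        · exact absurd hyX hzX
        · exact ⟨hzx, hzY, hzX⟩
      · rintro ⟨hzx, hzY, hzX⟩
        exact ⟨Or.inr ⟨hzx, hzY⟩, hzX⟩
    have hcard2 : (Y2 \ X).card < n := by
      rw [hsd, ← hn]
      exact Finset.card_erase_lt_of_mem hx
    obtain ⟨y', hy', h'⟩ := IH _ hcard2 Y2 h2 (hcard ▸ h) rfl
    refine ⟨y', ?_, h'⟩
    rw [hsd] at hy'
    exact Finset.mem_of_mem_erase hy'
end

section
/- The independent set family of a matroid is exactly an M♮-convex family containing the empty set. That is, a nonempty family 𝓘 ⊆ 2^S is the independent set family of a matroid if and only if 𝓘 is an M♮-convex family and ∅ ∈ 𝓘. -/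
section Aux
variable {α : Type*} [DecidableEq α] {I : Set (Finset α)}

/-- Augment an independent set to the size of another, staying in the union. -/
lemma aug_to_size
    (h2 : ∀ X ∈ I, ∀ Y ∈ I, Y.card < X.card → ∃ x ∈ X \ Y, insert x Y ∈ I) :
    ∀ n (D : Finset α), D ∈ I → ∀ J ∈ I, D.card + n = J.card →
      ∃ D' ∈ I, D ⊆ D' ∧ D' ⊆ D ∪ J ∧ D'.card = J.card := by
  intro n
  induction n with
  | zero =>
    intro D hD J hJ h
    exact ⟨D, hD, subset_rfl, Finset.subset_union_left, by omega⟩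
  | succ n ih =>
    intro D hD J hJ h
    obtain ⟨x, hx, hxI⟩ := h2 J hJ D hD (by omega)
    obtain ⟨hxJ, hxD⟩ := Finset.mem_sdiff.mp hx
    have hcard : (insert x D).card = D.card + 1 := Finset.card_insert_of_notMem hxD
    obtain ⟨D', hD'I, hsub1, hsub2, hcard'⟩ := ih (insert x D) hxI J hJ (by omega)
    refine ⟨D', hD'I, (Finset.subset_insert _ _).trans hsub1, ?_, hcard'⟩
    intro a ha
    have := hsub2 ha
    rcases Finset.mem_union.mp this with h' | h'
    · rcases Finset.mem_insert.mp h' with rfl | h''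
      · exact Finset.mem_union_right _ hxJ
      · exact Finset.mem_union_left _ h''
    · exact Finset.mem_union_right _ h'

/-- Span lemma: if `A` cannot be extended by any element of `T \ A`, then every
independent subset of `A ∪ something-spanned` has size at most `|A|`. -/
lemma span_card
    (h2 : ∀ X ∈ I, ∀ Y ∈ I, Y.card < X.card → ∃ x ∈ X \ Y, insert x Y ∈ I)
    {A J T : Finset α} (hA : A ∈ I) (hJ : J ∈ I) (hJT : J ⊆ T)
    (hspan : ∀ t ∈ T, t ∉ A → insert t A ∉ I) : J.card ≤ A.card := by
  by_contra hlt
  push_neg at hlt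
  obtain ⟨t, ht, htI⟩ := h2 J hJ A hA hlt
  obtain ⟨htJ, htA⟩ := Finset.mem_sdiff.mp ht
  exact hspan t (hJT htJ) htA htI

/-- Closure lemma: if every element of `D` is in `A` or spans `A`, and `z` spans `D`,
then `z` spans `A`. -/
lemma span_trans
    (h1 : ∀ X ∈ I, ∀ Y : Finset α, Y ⊆ X → Y ∈ I)
    (h2 : ∀ X ∈ I, ∀ Y ∈ I, Y.card < X.card → ∃ x ∈ X \ Y, insert x Y ∈ I)
    {A D : Finset α} {z : α} (hA : A ∈ I) (hD : D ∈ I)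
    (hspan : ∀ d ∈ D, d ∉ A → insert d A ∉ I)
    (hzA : z ∉ A) (hzD : insert z D ∉ I) : insert z A ∉ I := by
  intro hJ
  have hzDm : z ∉ D := by
    intro hz
    exact hzD (by rwa [Finset.insert_eq_self.mpr hz])
  have hDA : D.card ≤ A.card :=
    span_card h2 hA hD Finset.subset_union_right
      (fun t ht htA => hspan t (by
        rcases Finset.mem_union.mp ht with h | h
        · exact absurd h htA
        · exact h) htA)
  have hJcard : (insert z A).card = A.card + 1 := Finset.card_insert_of_notMem hzA
  obtain ⟨D', hD'I, hsub1, hsub2, hcard'⟩ :=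
    aug_to_size h2 (A.card + 1 - D.card) D hD (insert z A) hJ (by omega)
  by_cases hzD' : z ∈ D'
  · exact hzD (h1 D' hD'I (insert z D) (Finset.insert_subset hzD' hsub1))
  · have hD'sub : D' ⊆ A ∪ D := by
      intro a ha
      have := hsub2 ha
      rcases Finset.mem_union.mp this with h | h
      · exact Finset.mem_union_right _ h
      · rcases Finset.mem_insert.mp h with rfl | h'
        · exact absurd ha hzD'
        · exact Finset.mem_union_left _ h'
    have : D'.card ≤ A.card :=
      span_card h2 hA hD'I hD'sub (fun t ht htA => hspan t (by
        rcases Finset.mem_union.mp ht with h | h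
        · exact absurd h htA
        · exact h) htA)
    omega

/-- The "fundamental circuit" exists and is dependent. -/
lemma fundCircuit_dep
    (h1 : ∀ X ∈ I, ∀ Y : Finset α, Y ⊆ X → Y ∈ I)
    (h2 : ∀ X ∈ I, ∀ Y ∈ I, Y.card < X.card → ∃ x ∈ X \ Y, insert x Y ∈ I)
    {Y : Finset α} {x : α} (hY : Y ∈ I) (hxY : x ∉ Y) (hdep : insert x Y ∉ I) :
    ∃ F ⊆ Y, F ∈ I ∧ insert x F ∉ I ∧
      ∀ y, y ∈ F ↔ y ∈ Y ∧ (insert x Y).erase y ∈ I := by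
  classical
  set F := Y.filter (fun y => (insert x Y).erase y ∈ I) with hF
  refine ⟨F, Finset.filter_subset _ _, h1 Y hY F (Finset.filter_subset _ _), ?_,
    fun y => Finset.mem_filter⟩
  intro hC
  set C := insert x F with hCdef
  have hxF : x ∉ F := fun h => hxY (Finset.mem_of_mem_filter _ h)
  have hCsub : C ⊆ insert x Y :=
    Finset.insert_subset_insert _ (Finset.filter_subset _ _)
  have hCle : C.card ≤ Y.card := by
    by_contra h
    push_neg at h
    have h1' : C.card ≤ (insert x Y).card := Finset.card_le_card hCsub
    have h2' : (insert x Y).card = Y.card + 1 := Finset.card_insert_of_notMem hxY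
    have : C = insert x Y := Finset.eq_of_subset_of_card_le hCsub (by omega)
    rw [this] at hC
    exact hdep hC
  obtain ⟨D', hD'I, hsub1, hsub2, hcard'⟩ :=
    aug_to_size h2 (Y.card - C.card) C hC Y hY (by omega)
  have hD'sub : D' ⊆ insert x Y := by
    intro a ha
    rcases Finset.mem_union.mp (hsub2 ha) with h | h
    · exact hCsub h
    · exact Finset.mem_insert_of_mem h
  have hxD' : x ∈ D' := hsub1 (Finset.mem_insert_self _ _)
  have hsd : ((insert x Y) \ D').card = 1 := by
    rw [Finset.card_sdiff_of_subset hD'sub, Finset.card_insert_of_notMem hxY, hcard']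
    omega
  obtain ⟨y0, hy0⟩ := Finset.card_eq_one.mp hsd
  have hy0mem : y0 ∈ insert x Y \ D' := hy0 ▸ Finset.mem_singleton_self y0
  obtain ⟨hy0in, hy0nD⟩ := Finset.mem_sdiff.mp hy0mem
  have hy0x : y0 ≠ x := fun h => hy0nD (h ▸ hxD')
  have hy0Y : y0 ∈ Y := by
    rcases Finset.mem_insert.mp hy0in with h | h
    · exact absurd h hy0x
    · exact h
  have heq : D' = (insert x Y).erase y0 := by
    apply Finset.eq_of_subset_of_card_le
    · intro a ha
      exact Finset.mem_erase.mpr ⟨fun h => hy0nD (h ▸ ha), hD'sub ha⟩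
    · rw [Finset.card_erase_of_mem hy0in, Finset.card_insert_of_notMem hxY, hcard']
      omega
  have : y0 ∈ F := Finset.mem_filter.mpr ⟨hy0Y, heq ▸ hD'I⟩
  exact hy0nD (hsub1 (Finset.mem_insert_of_mem this))

end Aux

/-- A nonempty family `𝓘 ⊆ 2^S` is the independent set family of a matroid (i.e. satisfies
(I1) downward closure and (I2) augmentation) if and only if it is an M♮-convex family
containing the empty set. -/
theorem stmt_2 {α : Type*} [DecidableEq α] (I : Set (Finset α)) (hne : I.Nonempty) :
    ((∀ X ∈ I, ∀ Y : Finset α, Y ⊆ X → Y ∈ I) ∧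
      (∀ X ∈ I, ∀ Y ∈ I, Y.card < X.card → ∃ x ∈ X \ Y, insert x Y ∈ I))
      ↔ (MnatConvex I ∧ ∅ ∈ I) := by
  classical
  constructor
  · rintro ⟨h1, h2⟩
    have hempty : ∅ ∈ I := by
      obtain ⟨X, hX⟩ := hne
      exact h1 X hX ∅ (Finset.empty_subset X)
    refine ⟨⟨hne, ?_⟩, hempty⟩
    intro X hX Y hY x hx
    obtain ⟨hxX, hxY⟩ := Finset.mem_sdiff.mp hx
    have hAerase : X.erase x ∈ I := h1 X hX _ (Finset.erase_subset _ _)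
    by_cases hins : insert x Y ∈ I
    · exact Or.inl ⟨hAerase, hins⟩
    · right
      by_contra hcon
      push_neg at hcon
      set A := X.erase x with hAdef
      obtain ⟨F, hFY, hFI, hdep, hFmem⟩ := fundCircuit_dep h1 h2 hY hxY hins
      have hxA : x ∉ A := Finset.notMem_erase _ _
      have hspan : ∀ d ∈ F, d ∉ A → insert d A ∉ I := by
        intro d hd hdA
        obtain ⟨hdY, hdE⟩ := (hFmem d).mp hd
        have hdX : d ∉ X := by
          intro hdX
          exact hdA (Finset.mem_erase.mpr ⟨fun h => hxY (h ▸ hdY), hdX⟩)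
        exact fun hins' => hcon d (Finset.mem_sdiff.mpr ⟨hdY, hdX⟩) hins' hdE
      have : insert x A ∉ I := span_trans h1 h2 hAerase hFI hspan hxA hdep
      rw [hAdef, Finset.insert_erase hxX] at this
      exact this hX
  · rintro ⟨⟨_, hM⟩, hempty⟩
    have herase : ∀ X ∈ I, ∀ x, X.erase x ∈ I := by
      intro X hX x
      by_cases hx : x ∈ X
      · rcases hM X hX ∅ hempty x (Finset.mem_sdiff.mpr ⟨hx, Finset.notMem_empty x⟩) with
          ⟨h, _⟩ | ⟨y, hy, _⟩
        · exact h
        · exact absurd (Finset.mem_sdiff.mp hy).1 (Finset.notMem_empty y)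
      · rwa [Finset.erase_eq_of_notMem hx]
    have h1 : ∀ X ∈ I, ∀ Y : Finset α, Y ⊆ X → Y ∈ I := by
      have key : ∀ n (X : Finset α), X ∈ I → ∀ Y ⊆ X, (X \ Y).card = n → Y ∈ I := by
        intro n
        induction n with
        | zero =>
          intro X hX Y hYX h
          have hXY : X ⊆ Y := by
            intro a ha
            by_contra haY
            have : a ∈ X \ Y := Finset.mem_sdiff.mpr ⟨ha, haY⟩
            rw [Finset.card_eq_zero.mp h] at this
            exact Finset.notMem_empty a this
          rwa [Finset.Subset.antisymm hYX hXY]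
        | succ n ih =>
          intro X hX Y hYX h
          have hne' : (X \ Y).Nonempty := Finset.card_pos.mp (by omega)
          obtain ⟨x, hx⟩ := hne'
          obtain ⟨hxX, hxY⟩ := Finset.mem_sdiff.mp hx
          refine ih (X.erase x) (herase X hX x) Y ?_ ?_
          · intro a ha
            exact Finset.mem_erase.mpr ⟨fun h' => hxY (h' ▸ ha), hYX ha⟩
          · have : X.erase x \ Y = (X \ Y).erase x := by
              ext a
              simp only [Finset.mem_sdiff, Finset.mem_erase]
              tauto
            rw [this, Finset.card_erase_of_mem hx, h]
            omega
      intro X hX Y hYX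
      exact key (X \ Y).card X hX Y hYX rfl
    refine ⟨h1, ?_⟩
    have key : ∀ n (X : Finset α), X ∈ I → ∀ Y ∈ I, Y.card < X.card → (X \ Y).card = n →
        ∃ x ∈ X \ Y, insert x Y ∈ I := by
      intro n
      induction n with
      | zero =>
        intro X hX Y hY hlt h
        exfalso
        have hXY : X ⊆ Y := by
          intro a ha
          by_contra haY
          have : a ∈ X \ Y := Finset.mem_sdiff.mpr ⟨ha, haY⟩
          rw [Finset.card_eq_zero.mp h] at this
          exact Finset.notMem_empty a this
        have := Finset.card_le_card hXY
        omega
      | succ n ih =>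
        intro X hX Y hY hlt h
        have hne' : (X \ Y).Nonempty := Finset.card_pos.mp (by omega)
        obtain ⟨x, hx⟩ := hne'
        obtain ⟨hxX, hxY⟩ := Finset.mem_sdiff.mp hx
        rcases hM X hX Y hY x hx with ⟨_, hins⟩ | ⟨y, hy, hX', _⟩
        · exact ⟨x, hx, hins⟩
        · obtain ⟨hyY, hyX⟩ := Finset.mem_sdiff.mp hy
          have hyA : y ∉ X.erase x := fun h' => hyX (Finset.mem_of_mem_erase h')
          have hcardX' : (insert y (X.erase x)).card = X.card := by
            rw [Finset.card_insert_of_notMem hyA, Finset.card_erase_of_mem hxX]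
            have := Finset.card_pos.mpr ⟨x, hxX⟩
            omega
          have hsd : insert y (X.erase x) \ Y = (X \ Y).erase x := by
            ext a
            simp only [Finset.mem_sdiff, Finset.mem_erase, Finset.mem_insert]
            constructor
            · rintro ⟨rfl | ⟨hax, haX⟩, haY⟩
              · exact absurd hyY haY
              · exact ⟨hax, haX, haY⟩
            · rintro ⟨hax, haX, haY⟩
              exact ⟨Or.inr ⟨hax, haX⟩, haY⟩
          obtain ⟨x', hx', hins'⟩ := ih (insert y (X.erase x)) hX' Y hY (by omega)
            (by rw [hsd, Finset.card_erase_of_mem hx, h]; omega)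
          refine ⟨x', ?_, hins'⟩
          obtain ⟨hx'X', hx'Y⟩ := Finset.mem_sdiff.mp hx'
          rcases Finset.mem_insert.mp hx'X' with rfl | h'
          · exact absurd hyY hx'Y
          · exact Finset.mem_sdiff.mpr ⟨Finset.mem_of_mem_erase h', hx'Y⟩
    intro X hX Y hY hlt
    exact key (X \ Y).card X hX Y hY hlt rfl
end

section
/- Let 𝓙 ⊆ 2^S be an M♮-convex family, D a finite set disjoint from S, and t a positive integer. If the family 𝓑 = { B ⊆ S ∪ D : B ∩ S ∈ 𝓙 and |B| = t } is nonempty, then 𝓑 is the base family of a matroid on ground set S ∪ D, i.e., 𝓑 satisfies the base exchange axiom: for all B, B' ∈ 𝓑 and x ∈ B \ B', there exists y ∈ B' \ B with B - x + y ∈ 𝓑. -/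
/-- Augmentation property of M♮-convex families. -/
lemma mnat_aug {α : Type*} [DecidableEq α] {J : Set (Finset α)} (hJ : MnatConvex J) :
    ∀ X ∈ J, ∀ Y ∈ J, X.card < Y.card → ∃ y ∈ Y \ X, insert y X ∈ J := by
  have key : ∀ n : ℕ, ∀ Y ∈ J, ∀ X ∈ J, (Y \ X).card = n → X.card < Y.card →
      ∃ y ∈ Y \ X, insert y X ∈ J := by
    intro n
    induction n using Nat.strong_induction_on with
    | _ n ih =>
      intro Y hY X hX hn hlt
      have hne : (Y \ X).Nonempty := by
        rw [Finset.sdiff_nonempty]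
        intro h
        exact absurd (Finset.card_le_card h) (not_le.2 hlt)
      obtain ⟨x, hx⟩ := hne
      rcases hJ.2 Y hY X hX x hx with ⟨h1, h2⟩ | ⟨y, hy, h1, h2⟩
      · exact ⟨x, hx, h2⟩
      · have hxY : x ∈ Y := (Finset.mem_sdiff.1 hx).1
        have hxX : x ∉ X := (Finset.mem_sdiff.1 hx).2
        have hyX : y ∈ X := (Finset.mem_sdiff.1 hy).1
        have hyY : y ∉ Y := (Finset.mem_sdiff.1 hy).2
        have hdiff : (insert y (Y.erase x)) \ X = (Y \ X).erase x := by
          ext z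
          simp only [Finset.mem_sdiff, Finset.mem_erase, Finset.mem_insert]
          constructor
          · rintro ⟨hz1 | ⟨hz1, hz2⟩, hz3⟩
            · exact absurd (hz1 ▸ hyX) hz3
            · exact ⟨hz1, hz2, hz3⟩
          · rintro ⟨hz1, hz2, hz3⟩
            exact ⟨Or.inr ⟨hz1, hz2⟩, hz3⟩
        have hnpos : 0 < n := hn ▸ Finset.card_pos.2 ⟨x, hx⟩
        have hcd : ((insert y (Y.erase x)) \ X).card = n - 1 := by
          rw [hdiff, Finset.card_erase_of_mem hx, hn]
        have hcY : (insert y (Y.erase x)).card = Y.card := by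
          rw [Finset.card_insert_of_notMem (fun h => hyY (Finset.mem_of_mem_erase h)),
            Finset.card_erase_of_mem hxY]
          have : 0 < Y.card := Finset.card_pos.2 ⟨x, hxY⟩
          omega
        obtain ⟨y', hy', hins⟩ := ih (n - 1) (by omega) _ h1 X hX hcd (hcY ▸ hlt)
        rw [hdiff] at hy'
        exact ⟨y', Finset.mem_of_mem_erase hy', hins⟩
  intro X hX Y hY hlt
  exact key (Y \ X).card Y hY X hX rfl hlt

/-- If `J ⊆ 2^S` is M♮-convex, `D` is disjoint from `S`, `t > 0`, and
`𝓑 = { B ⊆ S ∪ D : B ∩ S ∈ J, |B| = t }` is nonempty, then `𝓑` satisfies the base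
exchange axiom (so it is the base family of a matroid on `S ∪ D`). -/
theorem stmt_3 {α : Type*} [DecidableEq α] (S D : Finset α) (hSD : Disjoint S D)
    (J : Set (Finset α)) (hJS : ∀ X ∈ J, X ⊆ S) (hJ : MnatConvex J)
    (t : ℕ) (ht : 0 < t)
    (B : Set (Finset α))
    (hBdef : B = {X : Finset α | X ⊆ S ∪ D ∧ X ∩ S ∈ J ∧ X.card = t})
    (hBne : B.Nonempty) :
    ∀ B₁ ∈ B, ∀ B₂ ∈ B, ∀ x ∈ B₁ \ B₂, ∃ y ∈ B₂ \ B₁, insert y (B₁.erase x) ∈ B := by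
  subst hBdef
  intro B₁ hB₁ B₂ hB₂ x hx
  obtain ⟨hB₁sub, hB₁J, hB₁c⟩ := hB₁
  obtain ⟨hB₂sub, hB₂J, hB₂c⟩ := hB₂
  rw [Finset.mem_sdiff] at hx
  obtain ⟨hx1, hx2⟩ := hx
  -- generic facts
  have hcard : ∀ y, y ∉ B₁ → (insert y (B₁.erase x)).card = t := by
    intro y hy
    rw [Finset.card_insert_of_notMem (fun h => hy (Finset.mem_of_mem_erase h)),
      Finset.card_erase_of_mem hx1, hB₁c]
    omega
  have hsub : ∀ y ∈ B₂, insert y (B₁.erase x) ⊆ S ∪ D := by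
    intro y hy
    exact Finset.insert_subset (hB₂sub hy) ((Finset.erase_subset _ _).trans hB₁sub)
  have heraseS : (B₁.erase x) ∩ S = (B₁ ∩ S).erase x := by
    ext z
    simp only [Finset.mem_inter, Finset.mem_erase]
    tauto
  have split : ∀ C : Finset α, C ⊆ S ∪ D → C.card = (C ∩ S).card + (C ∩ D).card := by
    intro C hC
    rw [← Finset.card_union_of_disjoint
      (Finset.disjoint_of_subset_left Finset.inter_subset_right
        (Finset.disjoint_of_subset_right Finset.inter_subset_right hSD)),
      ← Finset.inter_union_distrib_left, Finset.inter_eq_left.2 hC]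
  -- the case where B₂ \ B₁ ⊆ S : then B₂ ∩ D ⊆ B₁ ∩ D
  have hDsub : ¬ ((B₂ \ B₁) ∩ D).Nonempty → B₂ ∩ D ⊆ B₁ ∩ D := by
    intro hD z hz
    rw [Finset.mem_inter] at hz ⊢
    refine ⟨?_, hz.2⟩
    by_contra hzB₁
    exact hD ⟨z, Finset.mem_inter.2 ⟨Finset.mem_sdiff.2 ⟨hz.1, hzB₁⟩, hz.2⟩⟩
  by_cases hxS : x ∈ S
  · -- x ∈ S : use M♮ exchange on B₁ ∩ S, B₂ ∩ S
    have hxX : x ∈ B₁ ∩ S := Finset.mem_inter.2 ⟨hx1, hxS⟩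
    have hxY : x ∉ B₂ ∩ S := fun h => hx2 (Finset.mem_inter.1 h).1
    rcases hJ.2 _ hB₁J _ hB₂J x (Finset.mem_sdiff.2 ⟨hxX, hxY⟩) with ⟨h1, _⟩ | ⟨y, hy, h1, _⟩
    · by_cases hD : ((B₂ \ B₁) ∩ D).Nonempty
      · obtain ⟨y, hy⟩ := hD
        rw [Finset.mem_inter, Finset.mem_sdiff] at hy
        have hyS : y ∉ S := fun h => Finset.disjoint_left.1 hSD h hy.2
        refine ⟨y, Finset.mem_sdiff.2 hy.1, hsub y hy.1.1, ?_, hcard y hy.1.2⟩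
        rw [Finset.insert_inter_of_notMem hyS, heraseS]
        exact h1
      · -- augment (B₁ ∩ S).erase x from B₂ ∩ S
        have hc1 : (B₁ ∩ S).card ≤ (B₂ ∩ S).card := by
          have e1 := split B₁ hB₁sub
          have e2 := split B₂ hB₂sub
          have := Finset.card_le_card (hDsub hD)
          omega
        have hlt : ((B₁ ∩ S).erase x).card < (B₂ ∩ S).card := by
          rw [Finset.card_erase_of_mem hxX]
          have : 0 < (B₁ ∩ S).card := Finset.card_pos.2 ⟨x, hxX⟩
          omega
        obtain ⟨y, hy, hins⟩ := mnat_aug hJ _ h1 _ hB₂J hlt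
        rw [Finset.mem_sdiff] at hy
        have hyS : y ∈ S := (Finset.mem_inter.1 hy.1).2
        have hyx : y ≠ x := fun h => hxY (h ▸ hy.1)
        have hyB₁ : y ∉ B₁ := fun h =>
          hy.2 (Finset.mem_erase.2 ⟨hyx, Finset.mem_inter.2 ⟨h, hyS⟩⟩)
        refine ⟨y, Finset.mem_sdiff.2 ⟨(Finset.mem_inter.1 hy.1).1, hyB₁⟩,
          hsub y (Finset.mem_inter.1 hy.1).1, ?_, hcard y hyB₁⟩
        rw [Finset.insert_inter_of_mem hyS, heraseS]
        exact hins
    · -- direct exchange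
      rw [Finset.mem_sdiff] at hy
      have hyS : y ∈ S := (Finset.mem_inter.1 hy.1).2
      have hyB₁ : y ∉ B₁ := fun h => hy.2 (Finset.mem_inter.2 ⟨h, hyS⟩)
      refine ⟨y, Finset.mem_sdiff.2 ⟨(Finset.mem_inter.1 hy.1).1, hyB₁⟩,
        hsub y (Finset.mem_inter.1 hy.1).1, ?_, hcard y hyB₁⟩
      rw [Finset.insert_inter_of_mem hyS, heraseS]
      exact h1
  · -- x ∈ D
    have hxX : x ∉ B₁ ∩ S := fun h => hxS (Finset.mem_inter.1 h).2
    have heraseS' : (B₁.erase x) ∩ S = B₁ ∩ S := by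
      rw [heraseS, Finset.erase_eq_of_notMem hxX]
    have hxD : x ∈ D := by
      rcases Finset.mem_union.1 (hB₁sub hx1) with h | h
      · exact absurd h hxS
      · exact h
    by_cases hD : ((B₂ \ B₁) ∩ D).Nonempty
    · obtain ⟨y, hy⟩ := hD
      rw [Finset.mem_inter, Finset.mem_sdiff] at hy
      have hyS : y ∉ S := fun h => Finset.disjoint_left.1 hSD h hy.2
      refine ⟨y, Finset.mem_sdiff.2 hy.1, hsub y hy.1.1, ?_, hcard y hy.1.2⟩
      rw [Finset.insert_inter_of_notMem hyS, heraseS']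
      exact hB₁J
    · -- augment B₁ ∩ S from B₂ ∩ S; strict inequality since x ∈ B₁ ∩ D \ B₂
      have hssub : B₂ ∩ D ⊂ B₁ ∩ D := by
        refine ⟨hDsub hD, fun h => ?_⟩
        exact hx2 (Finset.mem_inter.1 (h (Finset.mem_inter.2 ⟨hx1, hxD⟩))).1
      have hc1 : (B₁ ∩ S).card < (B₂ ∩ S).card := by
        have e1 := split B₁ hB₁sub
        have e2 := split B₂ hB₂sub
        have := Finset.card_lt_card hssub
        omega
      obtain ⟨y, hy, hins⟩ := mnat_aug hJ _ hB₁J _ hB₂J hc1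
      rw [Finset.mem_sdiff] at hy
      have hyS : y ∈ S := (Finset.mem_inter.1 hy.1).2
      have hyB₁ : y ∉ B₁ := fun h => hy.2 (Finset.mem_inter.2 ⟨h, hyS⟩)
      refine ⟨y, Finset.mem_sdiff.2 ⟨(Finset.mem_inter.1 hy.1).1, hyB₁⟩,
        hsub y (Finset.mem_inter.1 hy.1).1, ?_, hcard y hyB₁⟩
      rw [Finset.insert_inter_of_mem hyS, heraseS']
      exact hins
end

section
/- Let M = (S, 𝓘) be a matroid with rank function r, and let C₁ ⊊ C₂ ⊊ ... ⊊ C_d ⊆ S be a chain. Suppose I ⊆ S satisfies I ∈ 𝓘, |I ∩ C_d| = r(C_d), and |I ∩ (C_j \ C_{j-1})| ≤ r(C_j) - r(C_{j-1}) for every j ∈ [d] (where C₀ = ∅). Then |I ∩ C_j| = r(C_j) for every j ∈ [d]. -/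
/-- Let `(S, Indep)` be a matroid with rank function `r`, and `C 1 ⊂ C 2 ⊂ ... ⊂ C d` a chain
(with `C 0 = ∅`). If `I` is independent, `|I ∩ C d| = r (C d)`, and
`|I ∩ (C j \ C (j-1))| ≤ r (C j) - r (C (j-1))` for all `j ∈ [d]`, then
`|I ∩ C j| = r (C j)` for all `j ∈ [d]`. -/
theorem stmt_8 {α : Type*} [DecidableEq α]
    (Indep : Finset α → Prop)
    (h_ne : ∃ I, Indep I)
    (h_down : ∀ I I' : Finset α, Indep I → I' ⊆ I → Indep I')
    (h_aug : ∀ I I' : Finset α, Indep I → Indep I' → I'.card < I.card →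
      ∃ x ∈ I \ I', Indep (insert x I'))
    (r : Finset α → ℕ)
    (hr : ∀ X : Finset α, (∃ Z, Z ⊆ X ∧ Indep Z ∧ Z.card = r X) ∧
      ∀ Z, Z ⊆ X → Indep Z → Z.card ≤ r X)
    (d : ℕ) (C : ℕ → Finset α) (hC0 : C 0 = ∅)
    (hchain : ∀ j, 2 ≤ j → j ≤ d → C (j - 1) ⊂ C j)
    (I : Finset α) (hI : Indep I)
    (htop : (I ∩ C d).card = r (C d))
    (hle : ∀ j, 1 ≤ j → j ≤ d → (I ∩ (C j \ C (j - 1))).card ≤ r (C j) - r (C (j - 1))) :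
    ∀ j, 1 ≤ j → j ≤ d → (I ∩ C j).card = r (C j) := by
  -- r of empty set is 0
  have hr0 : r (C 0) = 0 := by
    obtain ⟨Z, hZsub, _, hZcard⟩ := (hr (C 0)).1
    rw [hC0, Finset.subset_empty] at hZsub
    simp [hZsub] at hZcard
    omega
  -- chain inclusions
  have hsub : ∀ j, 1 ≤ j → j ≤ d → C (j - 1) ⊆ C j := by
    intro j h1 h2
    rcases eq_or_lt_of_le h1 with h | h
    · simp [← h, hC0]
    · exact (hchain j h h2).subset
  -- monotonicity of r along the chain
  have hmono : ∀ j, 1 ≤ j → j ≤ d → r (C (j - 1)) ≤ r (C j) := by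
    intro j h1 h2
    obtain ⟨Z, hZsub, hZind, hZcard⟩ := (hr (C (j - 1))).1
    rw [← hZcard]
    exact (hr (C j)).2 Z (hZsub.trans (hsub j h1 h2)) hZind
  -- splitting card
  have hsplit : ∀ j, 1 ≤ j → j ≤ d →
      (I ∩ C j).card = (I ∩ C (j - 1)).card + (I ∩ (C j \ C (j - 1))).card := by
    intro j h1 h2
    have : I ∩ C j = (I ∩ C (j - 1)) ∪ (I ∩ (C j \ C (j - 1))) := by
      rw [← Finset.inter_union_distrib_left, Finset.union_sdiff_of_subset (hsub j h1 h2)]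
    rw [this, Finset.card_union_of_disjoint]
    refine Finset.disjoint_left.2 fun a ha hb => ?_
    rw [Finset.mem_inter] at ha
    rw [Finset.mem_inter, Finset.mem_sdiff] at hb
    exact hb.2.2 ha.2
  -- telescoping sums
  have hsumI : ∀ k, k ≤ d →
      (I ∩ C k).card = ∑ j ∈ Finset.Icc 1 k, (I ∩ (C j \ C (j - 1))).card := by
    intro k
    induction k with
    | zero => intro _; simp [hC0]
    | succ n ih =>
      intro hk
      rw [Finset.sum_Icc_succ_top (by omega : 1 ≤ n + 1), ← ih (by omega),
        show n + 1 - 1 = n from rfl]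
      exact hsplit (n + 1) (by omega) hk
  have hsumr : ∀ k, k ≤ d →
      r (C k) = ∑ j ∈ Finset.Icc 1 k, (r (C j) - r (C (j - 1))) := by
    intro k
    induction k with
    | zero => intro _; simp [hr0]
    | succ n ih =>
      intro hk
      rw [Finset.sum_Icc_succ_top (by omega : 1 ≤ n + 1), ← ih (by omega),
        show n + 1 - 1 = n from rfl]
      have := hmono (n + 1) (by omega) hk
      simp only [show n + 1 - 1 = n from rfl] at this
      omega
  -- each inequality is an equality
  have hkey : ∀ j ∈ Finset.Icc 1 d,
      (I ∩ (C j \ C (j - 1))).card = r (C j) - r (C (j - 1)) := by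
    have hle' : ∀ j ∈ Finset.Icc 1 d,
        (I ∩ (C j \ C (j - 1))).card ≤ r (C j) - r (C (j - 1)) := by
      intro j hj
      rw [Finset.mem_Icc] at hj
      exact hle j hj.1 hj.2
    have heq : ∑ j ∈ Finset.Icc 1 d, (I ∩ (C j \ C (j - 1))).card
        = ∑ j ∈ Finset.Icc 1 d, (r (C j) - r (C (j - 1))) := by
      rw [← hsumI d le_rfl, ← hsumr d le_rfl, htop]
    exact fun j hj => ((Finset.sum_eq_sum_iff_of_le hle').1 heq j hj).symm ▸
      ((Finset.sum_eq_sum_iff_of_le hle').1 heq j hj)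
  intro j h1 h2
  rw [hsumI j h2, hsumr j h2]
  exact Finset.sum_congr rfl fun i hi => by
    rw [Finset.mem_Icc] at hi
    exact hkey i (Finset.mem_Icc.2 ⟨hi.1, hi.2.trans h2⟩)
end

section
/- Let M = (S, 𝓘) be a matroid with rank function r and let C₁ ⊊ C₂ ⊊ ... ⊊ C_d ⊆ S be a chain. For each j ∈ [d+1] (where C₀ = ∅ and C_{d+1} = S), let M_j be the matroid on C_j \ C_{j-1} obtained from M by contracting C_{j-1} and restricting to C_j \ C_{j-1}, and let M' be the direct sum of M₁, ..., M_{d+1}. Then a set I ⊆ S is an independent set of M with |I ∩ C_j| = r(C_j) for all j ∈ [d] if and only if I is an independent set of M' with |I ∩ C_d| = r(C_d). -/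
theorem matroid_aug_full {α : Type*} [DecidableEq α]
    (Indep : Finset α → Prop)
    (h_aug : ∀ I I' : Finset α, Indep I → Indep I' → I'.card < I.card →
      ∃ x ∈ I \ I', Indep (insert x I')) :
    ∀ n (I' A : Finset α), Indep I' → Indep A → I'.card + n = A.card →
      ∃ Z, I' ⊆ Z ∧ Z ⊆ I' ∪ A ∧ Indep Z ∧ Z.card = A.card := by
  intro n
  induction n with
  | zero =>
    intro I' A hI' hA h
    exact ⟨I', Finset.Subset.refl _, Finset.subset_union_left, hI', by omega⟩
  | succ n ih =>
    intro I' A hI' hA h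
    obtain ⟨x, hx, hins⟩ := h_aug A I' hA hI' (by omega)
    rw [Finset.mem_sdiff] at hx
    have hcard : (insert x I').card = I'.card + 1 := Finset.card_insert_of_notMem hx.2
    obtain ⟨Z, h1, h2, h3, h4⟩ := ih (insert x I') A hins hA (by omega)
    refine ⟨Z, (Finset.subset_insert _ _).trans h1, ?_, h3, h4⟩
    intro y hy
    rcases Finset.mem_union.1 (h2 hy) with h | h
    · rcases Finset.mem_insert.1 h with rfl | h
      · exact Finset.mem_union_right _ hx.1
      · exact Finset.mem_union_left _ h
    · exact Finset.mem_union_right _ h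

theorem matroid_exchange {α : Type*} [DecidableEq α]
    (Indep : Finset α → Prop)
    (h_down : ∀ I I' : Finset α, Indep I → I' ⊆ I → Indep I')
    (h_aug : ∀ I I' : Finset α, Indep I → Indep I' → I'.card < I.card →
      ∃ x ∈ I \ I', Indep (insert x I'))
    (X B B' Y : Finset α) (rX : ℕ)
    (hB : B ⊆ X) (hBi : Indep B) (hBc : B.card = rX)
    (hB' : B' ⊆ X) (hB'i : Indep B') (hB'c : B'.card = rX)
    (hYX : Disjoint Y X)
    (hmax : ∀ Z, Z ⊆ X → Indep Z → Z.card ≤ rX)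
    (hBY : Indep (B ∪ Y)) : Indep (B' ∪ Y) := by
  have hdisjBY : Disjoint B Y := (hYX.mono_right hB).symm
  have hcardBY : (B ∪ Y).card = rX + Y.card := by
    rw [Finset.card_union_of_disjoint hdisjBY, hBc]
  obtain ⟨Z, hZ1, hZ2, hZ3, hZ4⟩ := matroid_aug_full Indep h_aug ((B ∪ Y).card - B'.card)
      B' (B ∪ Y) hB'i hBY (by omega)
  have hZX : (Z ∩ X).card ≤ rX := hmax _ Finset.inter_subset_right
      (h_down _ _ hZ3 Finset.inter_subset_left)
  have hZY : Z \ X ⊆ Y := by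
    intro z hz
    rw [Finset.mem_sdiff] at hz
    rcases Finset.mem_union.1 (hZ2 hz.1) with h | h
    · exact absurd (hB' h) hz.2
    · rcases Finset.mem_union.1 h with h | h
      · exact absurd (hB h) hz.2
      · exact h
  have hsplit : (Z ∩ X).card + (Z \ X).card = Z.card := Finset.card_inter_add_card_sdiff _ _
  have hYc : (Z \ X).card = Y.card := by
    have := Finset.card_le_card hZY
    omega
  have hZYeq : Z \ X = Y := Finset.eq_of_subset_of_card_le hZY (by omega)
  have hB'sub : B' ⊆ Z ∩ X := Finset.subset_inter hZ1 hB'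
  have hZXeq : Z ∩ X = B' := (Finset.eq_of_subset_of_card_le hB'sub (by omega)).symm
  have : Z = B' ∪ Y := by
    rw [← hZXeq, ← hZYeq]
    ext x
    simp only [Finset.mem_union, Finset.mem_inter, Finset.mem_sdiff]
    tauto
  rwa [this] at hZ3

/-- Let `M = (S, Indep)` be a matroid with rank function `r` on ground set `S = univ`, and
`C 1 ⊂ C 2 ⊂ ... ⊂ C d` a chain, with `C 0 = ∅` and `C (d+1) = S`.  For each `j ∈ [d+1]`,
let `M_j` be the matroid on `C j \ C (j-1)` obtained by contracting `C (j-1)` and restricting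
to `C j \ C (j-1)` (a set `X ⊆ C j \ C (j-1)` is independent in `M_j` iff `B ∪ X` is
independent in `M` for a maximal independent subset `B` of `C (j-1)`), and let `M'` be their
direct sum.  Then `I` is independent in `M` with `|I ∩ C j| = r (C j)` for all `j ∈ [d]`
iff `I` is independent in `M'` with `|I ∩ C d| = r (C d)`. -/
theorem stmt_9 {α : Type*} [Fintype α] [DecidableEq α]
    (Indep : Finset α → Prop)
    (h_ne : ∃ I, Indep I)
    (h_down : ∀ I I' : Finset α, Indep I → I' ⊆ I → Indep I')
    (h_aug : ∀ I I' : Finset α, Indep I → Indep I' → I'.card < I.card →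
      ∃ x ∈ I \ I', Indep (insert x I'))
    (r : Finset α → ℕ)
    (hr : ∀ X : Finset α, (∃ Z, Z ⊆ X ∧ Indep Z ∧ Z.card = r X) ∧
      ∀ Z, Z ⊆ X → Indep Z → Z.card ≤ r X)
    (d : ℕ) (C : ℕ → Finset α) (hC0 : C 0 = ∅) (hCtop : C (d + 1) = Finset.univ)
    (hchain : ∀ j, 2 ≤ j → j ≤ d → C (j - 1) ⊂ C j)
    (I : Finset α) :
    (Indep I ∧ ∀ j, 1 ≤ j → j ≤ d → (I ∩ C j).card = r (C j)) ↔
      ((∀ j, 1 ≤ j → j ≤ d + 1 →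
          ∃ B : Finset α, B ⊆ C (j - 1) ∧ Indep B ∧ B.card = r (C (j - 1)) ∧
            Indep (B ∪ (I ∩ (C j \ C (j - 1))))) ∧
        (I ∩ C d).card = r (C d)) := by
  have hIempty : Indep (∅ : Finset α) := by
    obtain ⟨J, hJ⟩ := h_ne
    exact h_down J ∅ hJ (Finset.empty_subset _)
  have hr0 : r (C 0) = 0 := by
    obtain ⟨⟨Z, hZ1, _, hZ3⟩, _⟩ := hr (C 0)
    rw [hC0, Finset.subset_empty] at hZ1
    simp [hZ1] at hZ3
    omega
  have hr0' : r (∅ : Finset α) = 0 := by rw [← hC0]; exact hr0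
  have nested : ∀ j, j ≤ d → C j ⊆ C (j + 1) := by
    intro j hj
    by_cases h0 : j = 0
    · simp [h0, hC0]
    rcases eq_or_lt_of_le hj with rfl | hlt
    · rw [hCtop]; exact Finset.subset_univ _
    · have := hchain (j + 1) (by omega) (by omega)
      simpa using this.subset
  have decomp : ∀ j, j ≤ d → I ∩ C (j + 1) = (I ∩ C j) ∪ (I ∩ (C (j + 1) \ C j)) := by
    intro j hj
    ext x
    simp only [Finset.mem_inter, Finset.mem_union, Finset.mem_sdiff]
    have := @nested j hj x
    by_cases hx : x ∈ C j <;> tauto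
  have disj : ∀ j, Disjoint (I ∩ C j) (I ∩ (C (j + 1) \ C j)) := by
    intro j
    refine Finset.disjoint_left.2 ?_
    intro x hx hx'
    rw [Finset.mem_inter] at hx hx'
    rw [Finset.mem_sdiff] at hx'
    exact hx'.2.2 hx.2
  have cardsum : ∀ j, j ≤ d →
      (I ∩ C (j + 1)).card = (I ∩ C j).card + (I ∩ (C (j + 1) \ C j)).card := by
    intro j hj
    rw [decomp j hj, Finset.card_union_of_disjoint (disj j)]
  constructor
  · rintro ⟨hI, hcards⟩
    have hcd : (I ∩ C d).card = r (C d) := by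
      rcases Nat.eq_zero_or_pos d with rfl | hd
      · rw [hr0, hC0]; simp
      · exact hcards d hd le_rfl
    refine ⟨?_, hcd⟩
    intro j hj1 hj2
    refine ⟨I ∩ C (j - 1), Finset.inter_subset_right,
      h_down I _ hI Finset.inter_subset_left, ?_, ?_⟩
    · rcases eq_or_lt_of_le hj1 with rfl | hlt
      · simp [hC0]; exact hr0'.symm
      · exact hcards (j - 1) (by omega) (by omega)
    · refine h_down I _ hI ?_
      intro x hx
      rcases Finset.mem_union.1 hx with h | h
      · exact (Finset.mem_inter.1 h).1
      · exact (Finset.mem_inter.1 h).1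
  · rintro ⟨H, hcd⟩
    -- extract data for each step j → j+1
    have H' : ∀ j, j ≤ d → ∃ B : Finset α, B ⊆ C j ∧ Indep B ∧ B.card = r (C j) ∧
        Indep (B ∪ (I ∩ (C (j + 1) \ C j))) := by
      intro j hj
      have := H (j + 1) (by omega) (by omega)
      simpa using this
    have incstep : ∀ j, j ≤ d →
        r (C j) + (I ∩ (C (j + 1) \ C j)).card ≤ r (C (j + 1)) := by
      intro j hj
      obtain ⟨B, hB1, hB2, hB3, hB4⟩ := H' j hj
      have hsub : B ∪ (I ∩ (C (j + 1) \ C j)) ⊆ C (j + 1) := by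
        intro x hx
        rcases Finset.mem_union.1 hx with h | h
        · exact nested j hj (hB1 h)
        · exact (Finset.mem_sdiff.1 (Finset.mem_inter.1 h).2).1
      have hdisj : Disjoint B (I ∩ (C (j + 1) \ C j)) := by
        refine Finset.disjoint_left.2 ?_
        intro x hx hx'
        exact (Finset.mem_sdiff.1 (Finset.mem_inter.1 hx').2).2 (hB1 hx)
      have := (hr (C (j + 1))).2 _ hsub hB4
      rw [Finset.card_union_of_disjoint hdisj, hB3] at this
      exact this
    have upper : ∀ j, j ≤ d + 1 → (I ∩ C j).card ≤ r (C j) := by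
      intro j
      induction j with
      | zero => intro _; simp [hC0]
      | succ n ih =>
        intro h
        have h1 := ih (by omega)
        have h2 := incstep n (by omega)
        have h3 := cardsum n (by omega)
        omega
    have lowaux : ∀ k, k ≤ d →
        r (C (d - k)) + (I ∩ C d).card ≤ (I ∩ C (d - k)).card + r (C d) := by
      intro k
      induction k with
      | zero => intro _; simp; omega
      | succ n ih =>
        intro h
        have hih := ih (by omega)
        have hjd : d - n = (d - (n + 1)) + 1 := by omega
        rw [hjd] at hih
        have h2 := incstep (d - (n + 1)) (by omega)
        have h3 := cardsum (d - (n + 1)) (by omega)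
        omega
    have eqc : ∀ j, j ≤ d → (I ∩ C j).card = r (C j) := by
      intro j hj
      have h1 := upper j (by omega)
      have h2 := lowaux (d - j) (by omega)
      have : d - (d - j) = j := by omega
      rw [this] at h2
      omega
    have indep : ∀ j, j ≤ d + 1 → Indep (I ∩ C j) := by
      intro j
      induction j with
      | zero => rw [hC0]; simpa using hIempty
      | succ n ih =>
        intro h
        have hih := ih (by omega)
        obtain ⟨B, hB1, hB2, hB3, hB4⟩ := H' n (by omega)
        have hY : Disjoint (I ∩ (C (n + 1) \ C n)) (C n) := by
          refine Finset.disjoint_left.2 ?_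
          intro x hx hx'
          exact (Finset.mem_sdiff.1 (Finset.mem_inter.1 hx).2).2 hx'
        have := matroid_exchange Indep h_down h_aug (C n) B (I ∩ C n)
          (I ∩ (C (n + 1) \ C n)) (r (C n)) hB1 hB2 hB3 Finset.inter_subset_right
          hih (eqc n (by omega)) hY (hr (C n)).2 hB4
        rw [decomp n (by omega)]
        exact this
    constructor
    · have := indep (d + 1) le_rfl
      rwa [hCtop, Finset.inter_univ] at this
    · intro j hj1 hj2
      exact eqc j hj2
end

section
/- For any pair of independent sets (I, J) of a matroid given as a direct sum of matroids M₁ ⊕ ... ⊕ M_k, there exists a feasible pairing for (I, J): a matching N between I \ J and J \ I such that (FP1) I - u + v is independent for every pair uv ∈ N with u ∈ I \ J, v ∈ J \ I; (FP2) every v ∈ J \ I uncovered by N satisfies that I + v is independent; (FP3) every pair uv ∈ N lies within a single summand's ground set S_j; and (FP4) for each j, the number of pairs within S_j equals min{|S_j ∩ (I \ J)|, |S_j ∩ (J \ I)|}. -/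
section Helpers

variable {α : Type*} [DecidableEq α] {Indep : Finset α → Prop}

/-- Repeated augmentation: an independent set `X` with `|X| ≤ |Y|` can be
extended within `X ∪ Y` to an independent set of size `|Y|`. -/
lemma aug_up
    (h_aug : ∀ X X' : Finset α, Indep X → Indep X' → X'.card < X.card →
      ∃ x ∈ X \ X', Indep (insert x X'))
    (Y : Finset α) (hY : Indep Y) :
    ∀ n (X : Finset α), Indep X → X.card + n = Y.card →
      ∃ Z, Indep Z ∧ X ⊆ Z ∧ Z ⊆ X ∪ Y ∧ Z.card = Y.card := by
  intro n
  induction n with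
  | zero =>
    intro X hX h
    exact ⟨X, hX, subset_rfl, Finset.subset_union_left, by omega⟩
  | succ n ih =>
    intro X hX h
    obtain ⟨x, hx, hxi⟩ := h_aug Y X hY hX (by omega)
    simp only [Finset.mem_sdiff] at hx
    obtain ⟨Z, hZ, h1, h2, h3⟩ := ih (insert x X) hxi
      (by rw [Finset.card_insert_of_notMem hx.2]; omega)
    refine ⟨Z, hZ, fun a ha => h1 (Finset.mem_insert_of_mem ha), fun a ha => ?_, h3⟩
    rcases Finset.mem_union.mp (h2 ha) with h' | h'
    · rcases Finset.mem_insert.mp h' with rfl | h'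
      · exact Finset.mem_union_right _ hx.1
      · exact Finset.mem_union_left _ h'
    · exact Finset.mem_union_right _ h'

/-- Core exchange lemma: for independent sets `X, Y` of equal size there is an
injection `f` from `Y \ X` into `X \ Y` with `X - f v + v` independent. -/
lemma core_exchange
    (h_down : ∀ X X' : Finset α, Indep X → X' ⊆ X → Indep X')
    (h_aug : ∀ X X' : Finset α, Indep X → Indep X' → X'.card < X.card →
      ∃ x ∈ X \ X', Indep (insert x X'))
    (X Y : Finset α) (hX : Indep X) (hY : Indep Y) (hcard : X.card = Y.card) :
    ∃ f : α → α, Set.InjOn f (Y \ X : Finset α) ∧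
      ∀ v ∈ Y \ X, f v ∈ X \ Y ∧ Indep (insert v (X.erase (f v))) := by
  classical
  set t : {v // v ∈ Y \ X} → Finset α :=
    fun v => (X \ Y).filter (fun u => Indep (insert v.1 (X.erase u))) with ht
  have hall : ∀ s : Finset {v // v ∈ Y \ X}, s.card ≤ (s.biUnion t).card := by
    intro s
    by_contra hlt
    push_neg at hlt
    set U : Finset α := s.biUnion t with hU
    set T : Finset α := s.image (fun v => v.1) with hT
    have hTcard : T.card = s.card := Finset.card_image_of_injective _ Subtype.val_injective
    have hTsub : T ⊆ Y \ X := by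
      intro x hx
      simp only [hT, Finset.mem_image] at hx
      obtain ⟨v, _, rfl⟩ := hx
      exact v.2
    have hUsub : U ⊆ X \ Y := by
      intro x hx
      simp only [hU, Finset.mem_biUnion, ht, Finset.mem_filter] at hx
      obtain ⟨v, _, hx, _⟩ := hx
      exact hx
    set G : Finset α := (X ∩ Y) ∪ U with hG
    have hGsubX : G ⊆ X := by
      intro x hx
      rcases Finset.mem_union.mp hx with h | h
      · exact (Finset.mem_inter.mp h).1
      · exact (Finset.mem_sdiff.mp (hUsub h)).1
    have hGindep : Indep G := h_down X G hX hGsubX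
    set W : Finset α := (X ∩ Y) ∪ T with hW
    have hWsubY : W ⊆ Y := by
      intro x hx
      rcases Finset.mem_union.mp hx with h | h
      · exact (Finset.mem_inter.mp h).2
      · exact (Finset.mem_sdiff.mp (hTsub h)).1
    have hWindep : Indep W := h_down Y W hY hWsubY
    have hGcard : G.card < W.card := by
      have h1 : G.card ≤ (X ∩ Y).card + U.card := Finset.card_union_le _ _
      have h2 : W.card = (X ∩ Y).card + T.card := by
        rw [hW, Finset.card_union_of_disjoint]
        rw [Finset.disjoint_left]
        intro a ha1 ha2
        exact (Finset.mem_sdiff.mp (hTsub ha2)).2 (Finset.mem_inter.mp ha1).1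
      omega
    obtain ⟨x, hxmem, hxind⟩ := h_aug W G hWindep hGindep hGcard
    simp only [Finset.mem_sdiff] at hxmem
    have hxT : x ∈ T := by
      rcases Finset.mem_union.mp hxmem.1 with h | h
      · exact absurd (Finset.mem_union_left _ h) hxmem.2
      · exact h
    have hxYX : x ∈ Y \ X := hTsub hxT
    have hxnX : x ∉ X := (Finset.mem_sdiff.mp hxYX).2
    have hxnG : x ∉ G := hxmem.2
    -- grow `insert x G` up to size `|X|` inside `insert x X`
    have hc : (insert x G).card ≤ X.card := by
      have h1 : W.card ≤ Y.card := Finset.card_le_card hWsubY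
      have h2 : (insert x G).card ≤ G.card + 1 := Finset.card_insert_le _ _
      omega
    obtain ⟨Z, hZind, hZ1, hZ2, hZ3⟩ := aug_up h_aug X hX (X.card - (insert x G).card)
      (insert x G) hxind (by omega)
    have hZsub : Z ⊆ insert x X := by
      intro a ha
      rcases Finset.mem_union.mp (hZ2 ha) with h | h
      · rcases Finset.mem_insert.mp h with rfl | h
        · exact Finset.mem_insert_self _ _
        · exact Finset.mem_insert_of_mem (hGsubX h)
      · exact Finset.mem_insert_of_mem h
    have hxZ : x ∈ Z := hZ1 (Finset.mem_insert_self _ _)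
    have hmiss : ((insert x X) \ Z).card = 1 := by
      rw [Finset.card_sdiff_of_subset hZsub, Finset.card_insert_of_notMem hxnX, hZ3]
      omega
    obtain ⟨u, hu⟩ := Finset.card_eq_one.mp hmiss
    have humem : u ∈ (insert x X) \ Z := hu ▸ Finset.mem_singleton_self u
    rw [Finset.mem_sdiff] at humem
    have huX : u ∈ X := by
      rcases Finset.mem_insert.mp humem.1 with rfl | h
      · exact absurd hxZ humem.2
      · exact h
    have hune : u ≠ x := fun h => hxnX (h ▸ huX)
    have hZeq : Z = insert x (X.erase u) := by
      have hsub : Z ⊆ insert x (X.erase u) := by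
        intro a ha
        rcases Finset.mem_insert.mp (hZsub ha) with rfl | h
        · exact Finset.mem_insert_self _ _
        · refine Finset.mem_insert_of_mem (Finset.mem_erase.mpr ⟨?_, h⟩)
          rintro rfl
          exact humem.2 ha
      apply Finset.eq_of_subset_of_card_le hsub
      rw [Finset.card_insert_of_notMem (fun h => hxnX (Finset.mem_of_mem_erase h)),
        Finset.card_erase_of_mem huX, hZ3]
      have : 0 < X.card := Finset.card_pos.mpr ⟨u, huX⟩
      omega
    -- so `u ∈ U ⊆ G ⊆ Z`, contradiction
    have huU : u ∈ U := by
      simp only [hT, Finset.mem_image] at hxT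
      obtain ⟨v, hvs, hvx⟩ := hxT
      refine Finset.mem_biUnion.mpr ⟨v, hvs, ?_⟩
      simp only [ht, Finset.mem_filter, Finset.mem_sdiff]
      refine ⟨⟨huX, fun huY => hxnG ?_⟩, by rw [hvx, ← hZeq]; exact hZind⟩
      ·
        exact absurd (Finset.mem_union_left _ (Finset.mem_inter.mpr ⟨huX, huY⟩))
          (fun h => humem.2 (hZ1 (Finset.mem_insert_of_mem h)))
    exact humem.2 (hZ1 (Finset.mem_insert_of_mem (Finset.mem_union_right _ huU)))
  obtain ⟨f, hfinj, hf⟩ := (Finset.all_card_le_biUnion_card_iff_exists_injective t).mp hall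
  refine ⟨fun v => if h : v ∈ Y \ X then f ⟨v, h⟩ else v, ?_, ?_⟩
  · intro a ha b hb hab
    simp only [Finset.coe_sdiff, Set.mem_diff, Finset.mem_coe] at ha hb
    have ha' : a ∈ Y \ X := Finset.mem_sdiff.mpr ha
    have hb' : b ∈ Y \ X := Finset.mem_sdiff.mpr hb
    simp only [dif_pos ha', dif_pos hb'] at hab
    exact congrArg Subtype.val (hfinj hab)
  · intro v hv
    simp only [dif_pos hv]
    have := hf ⟨v, hv⟩
    simp only [ht, Finset.mem_filter] at this
    exact this

end Helpers

section PerPart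

variable {α : Type*} [DecidableEq α] {Indep : Finset α → Prop}

/-- Feasible pairing for a single matroid. -/
lemma part_pairing
    (h_down : ∀ X X' : Finset α, Indep X → X' ⊆ X → Indep X')
    (h_aug : ∀ X X' : Finset α, Indep X → Indep X' → X'.card < X.card →
      ∃ x ∈ X \ X', Indep (insert x X'))
    (I' J' : Finset α) (hI' : Indep I') (hJ' : Indep J') :
    ∃ N : Finset (α × α),
      (∀ p ∈ N, p.1 ∈ I' \ J' ∧ p.2 ∈ J' \ I') ∧
      (∀ p ∈ N, ∀ q ∈ N, p ≠ q → p.1 ≠ q.1 ∧ p.2 ≠ q.2) ∧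
      (∀ p ∈ N, Indep (insert p.2 (I'.erase p.1))) ∧
      (∀ v ∈ J' \ I', (∀ p ∈ N, p.2 ≠ v) → Indep (insert v I')) ∧
      N.card = min (I' \ J').card (J' \ I').card := by
  classical
  have hIJ : (I' \ J').card + (I' ∩ J').card = I'.card := Finset.card_sdiff_add_card_inter _ _
  have hJI : (J' \ I').card + (J' ∩ I').card = J'.card := Finset.card_sdiff_add_card_inter _ _
  have hcomm : (I' ∩ J').card = (J' ∩ I').card := by rw [Finset.inter_comm]
  rcases le_or_gt J'.card I'.card with hle | hlt
  · -- Case 1: |J'| ≤ |I'|; augment J' up to a set J'' of size |I'|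
    obtain ⟨J'', hJ''ind, hsub1, hsub2, hcard⟩ :=
      aug_up h_aug I' hI' (I'.card - J'.card) J' hJ' (by omega)
    have hdiff : J'' \ I' = J' \ I' := by
      apply Finset.Subset.antisymm
      · intro a ha
        rw [Finset.mem_sdiff] at ha ⊢
        rcases Finset.mem_union.mp (hsub2 ha.1) with h | h
        · exact ⟨h, ha.2⟩
        · exact absurd h ha.2
      · exact Finset.sdiff_subset_sdiff hsub1 subset_rfl
    obtain ⟨f, hfinj, hf⟩ := core_exchange h_down h_aug I' J'' hI' hJ''ind hcard.symm
    rw [hdiff] at hfinj hf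
    refine ⟨(J' \ I').image (fun v => (f v, v)), ?_, ?_, ?_, ?_, ?_⟩
    · intro p hp
      obtain ⟨v, hv, rfl⟩ := Finset.mem_image.mp hp
      obtain ⟨h1, _⟩ := hf v hv
      refine ⟨?_, hv⟩
      rw [Finset.mem_sdiff] at h1 ⊢
      exact ⟨h1.1, fun h => h1.2 (hsub1 h)⟩
    · intro p hp q hq hpq
      obtain ⟨v, hv, rfl⟩ := Finset.mem_image.mp hp
      obtain ⟨w, hw, rfl⟩ := Finset.mem_image.mp hq
      have hvw : v ≠ w := fun h => hpq (by rw [h])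
      exact ⟨fun h => hvw (hfinj hv hw h), hvw⟩
    · intro p hp
      obtain ⟨v, hv, rfl⟩ := Finset.mem_image.mp hp
      exact (hf v hv).2
    · intro v hv hcov
      exact absurd rfl (hcov (f v, v) (Finset.mem_image_of_mem _ hv))
    · rw [Finset.card_image_of_injOn (fun a ha b hb h => by
        simpa using congrArg Prod.snd h)]
      have : (J' \ I').card ≤ (I' \ J').card := by omega
      omega
  · -- Case 2: |I'| < |J'|; augment I' up to a set I'' of size |J'|
    obtain ⟨I'', hI''ind, hsub1, hsub2, hcard⟩ :=
      aug_up h_aug J' hJ' (J'.card - I'.card) I' hI' (by omega)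
    have hdiff : I'' \ J' = I' \ J' := by
      apply Finset.Subset.antisymm
      · intro a ha
        rw [Finset.mem_sdiff] at ha ⊢
        rcases Finset.mem_union.mp (hsub2 ha.1) with h | h
        · exact ⟨h, ha.2⟩
        · exact absurd h ha.2
      · exact Finset.sdiff_subset_sdiff hsub1 subset_rfl
    obtain ⟨f, hfinj, hf⟩ := core_exchange h_down h_aug I'' J' hI''ind hJ' hcard
    have hJI'' : (J' \ I'').card + (J' ∩ I'').card = J'.card :=
      Finset.card_sdiff_add_card_inter _ _
    have hI''J : (I'' \ J').card + (I'' ∩ J').card = I''.card :=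
      Finset.card_sdiff_add_card_inter _ _
    have hcomm2 : (J' ∩ I'').card = (I'' ∩ J').card := by rw [Finset.inter_comm]
    have hdcard : (J' \ I'').card = (I' \ J').card := by
      rw [hdiff] at hI''J; omega
    refine ⟨(J' \ I'').image (fun v => (f v, v)), ?_, ?_, ?_, ?_, ?_⟩
    · intro p hp
      obtain ⟨v, hv, rfl⟩ := Finset.mem_image.mp hp
      obtain ⟨h1, _⟩ := hf v hv
      rw [hdiff] at h1
      refine ⟨h1, ?_⟩
      rw [Finset.mem_sdiff] at hv ⊢
      exact ⟨hv.1, fun h => hv.2 (hsub1 h)⟩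
    · intro p hp q hq hpq
      obtain ⟨v, hv, rfl⟩ := Finset.mem_image.mp hp
      obtain ⟨w, hw, rfl⟩ := Finset.mem_image.mp hq
      have hvw : v ≠ w := fun h => hpq (by rw [h])
      exact ⟨fun h => hvw (hfinj hv hw h), hvw⟩
    · intro p hp
      obtain ⟨v, hv, rfl⟩ := Finset.mem_image.mp hp
      refine h_down _ _ (hf v hv).2 ?_
      exact Finset.insert_subset_insert _ (Finset.erase_subset_erase _ hsub1)
    · intro v hv hcov
      have hvI'' : v ∈ I'' := by
        by_contra hvn
        have hv' : v ∈ J' \ I'' := Finset.mem_sdiff.mpr ⟨(Finset.mem_sdiff.mp hv).1, hvn⟩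
        exact hcov (f v, v) (Finset.mem_image_of_mem _ hv') rfl
      exact h_down _ _ hI''ind (Finset.insert_subset hvI'' hsub1)
    · rw [Finset.card_image_of_injOn (fun a ha b hb h => by
        simpa using congrArg Prod.snd h), hdcard]
      have : (I' \ J').card ≤ (J' \ I').card := by omega
      omega

end PerPart



/-- Existence of a feasible pairing (Kamiyama).  Let `M` be a matroid on `S` given as the
direct sum of matroids `M_j` on the parts `P j` of a partition of `S` (a set `X` is
independent in `M` iff `X ∩ P j` is independent in `M_j` for every `j`).  For any pair
`(I, J)` of independent sets of `M`, there is a pairing `N` between `I \ J` and `J \ I`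
satisfying (FP1)–(FP4). -/
theorem stmt_12 {α ι : Type*} [Fintype α] [DecidableEq α] [Fintype ι] [DecidableEq ι]
    (P : ι → Finset α)
    (hdisj : Pairwise fun i j => Disjoint (P i) (P j))
    (hcover : ∀ u : α, ∃ i, u ∈ P i)
    -- each summand `M_j` is a matroid on ground set `P j`:
    (Indep : ι → Finset α → Prop)
    (hground : ∀ j X, Indep j X → X ⊆ P j)
    (h_empty : ∀ j, Indep j ∅)
    (h_down : ∀ j, ∀ X X' : Finset α, Indep j X → X' ⊆ X → Indep j X')
    (h_aug : ∀ j, ∀ X X' : Finset α, Indep j X → Indep j X' → X'.card < X.card →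
      ∃ x ∈ X \ X', Indep j (insert x X'))
    -- `I` and `J` are independent in the direct sum:
    (I J : Finset α) (hI : ∀ j, Indep j (I ∩ P j)) (hJ : ∀ j, Indep j (J ∩ P j)) :
    ∃ N : Finset (α × α),
      -- N is a pairing between I \ J and J \ I:
      (∀ p ∈ N, p.1 ∈ I \ J ∧ p.2 ∈ J \ I) ∧
      (∀ p ∈ N, ∀ q ∈ N, p ≠ q → p.1 ≠ q.1 ∧ p.2 ≠ q.2) ∧
      -- (FP1): I - u + v is independent for every pair uv ∈ N:
      (∀ p ∈ N, ∀ j, Indep j ((insert p.2 (I.erase p.1)) ∩ P j)) ∧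
      -- (FP2): every v ∈ J \ I uncovered by N satisfies that I + v is independent:
      (∀ v ∈ J \ I, (∀ p ∈ N, p.2 ≠ v) → ∀ j, Indep j ((insert v I) ∩ P j)) ∧
      -- (FP3): every pair lies within a single part:
      (∀ p ∈ N, ∃ j, p.1 ∈ P j ∧ p.2 ∈ P j) ∧
      -- (FP4): the number of pairs within P j is min{|P j ∩ (I \ J)|, |P j ∩ (J \ I)|}:
      (∀ j, (N.filter (fun p => p.1 ∈ P j)).card =
        min ((P j ∩ (I \ J)).card) ((P j ∩ (J \ I)).card)) := by
  classical
  choose N hN1 hN2 hN3 hN4 hN5 using fun j =>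
    part_pairing (h_down j) (h_aug j) (I ∩ P j) (J ∩ P j) (hI j) (hJ j)
  -- basic set identities
  have hsd : ∀ j, (I ∩ P j) \ (J ∩ P j) = (I \ J) ∩ P j := by
    intro j; ext a
    simp only [Finset.mem_sdiff, Finset.mem_inter]
    tauto
  have hsd' : ∀ j, (J ∩ P j) \ (I ∩ P j) = (J \ I) ∩ P j := by
    intro j; ext a
    simp only [Finset.mem_sdiff, Finset.mem_inter]
    tauto
  have key1 : ∀ (v u : α) (j : ι), v ∈ P j →
      (insert v (I.erase u)) ∩ P j = insert v ((I ∩ P j).erase u) := by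
    intro v u j hv
    ext a
    simp only [Finset.mem_inter, Finset.mem_insert, Finset.mem_erase]
    constructor
    · rintro ⟨(rfl | ⟨h1, h2⟩), hp⟩
      · exact Or.inl rfl
      · exact Or.inr ⟨h1, h2, hp⟩
    · rintro (rfl | ⟨h1, h2, hp⟩)
      · exact ⟨Or.inl rfl, hv⟩
      · exact ⟨Or.inr ⟨h1, h2⟩, hp⟩
  have key2 : ∀ (v u : α) (T : Finset α), v ∉ T → u ∉ T →
      (insert v (I.erase u)) ∩ T = I ∩ T := by
    intro v u T hv hu
    ext a
    simp only [Finset.mem_inter, Finset.mem_insert, Finset.mem_erase]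
    constructor
    · rintro ⟨(rfl | ⟨h1, h2⟩), hp⟩
      · exact absurd hp hv
      · exact ⟨h2, hp⟩
    · rintro ⟨h1, h2⟩
      exact ⟨Or.inr ⟨fun h => hu (h ▸ h2), h1⟩, h2⟩
  have key3 : ∀ (v : α) (j : ι), v ∈ P j → (insert v I) ∩ P j = insert v (I ∩ P j) := by
    intro v j hv
    rw [Finset.insert_inter_of_mem hv]
  have key4 : ∀ (v : α) (T : Finset α), v ∉ T → (insert v I) ∩ T = I ∩ T := by
    intro v T hv
    rw [Finset.insert_inter_of_notMem hv]
  -- part membership of pairs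
  have hmem1 : ∀ j, ∀ p ∈ N j, p.1 ∈ P j ∧ p.1 ∈ I \ J := by
    intro j p hp
    have := (hN1 j p hp).1
    rw [hsd j] at this
    rw [Finset.mem_inter] at this
    exact ⟨this.2, this.1⟩
  have hmem2 : ∀ j, ∀ p ∈ N j, p.2 ∈ P j ∧ p.2 ∈ J \ I := by
    intro j p hp
    have := (hN1 j p hp).2
    rw [hsd' j] at this
    rw [Finset.mem_inter] at this
    exact ⟨this.2, this.1⟩
  refine ⟨Finset.univ.biUnion N, ?_, ?_, ?_, ?_, ?_, ?_⟩
  · intro p hp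
    obtain ⟨j, _, hp⟩ := Finset.mem_biUnion.mp hp
    exact ⟨(hmem1 j p hp).2, (hmem2 j p hp).2⟩
  · intro p hp q hq hpq
    obtain ⟨j, _, hp⟩ := Finset.mem_biUnion.mp hp
    obtain ⟨j', _, hq⟩ := Finset.mem_biUnion.mp hq
    rcases eq_or_ne j j' with rfl | hne
    · exact hN2 j p hp q hq hpq
    · have hd := Finset.disjoint_left.mp (hdisj hne)
      exact ⟨fun h => hd (hmem1 j p hp).1 (h ▸ (hmem1 j' q hq).1),
        fun h => hd (hmem2 j p hp).1 (h ▸ (hmem2 j' q hq).1)⟩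
  · intro p hp j'
    obtain ⟨j, _, hp⟩ := Finset.mem_biUnion.mp hp
    rcases eq_or_ne j' j with rfl | hne
    · rw [key1 p.2 p.1 j' (hmem2 j' p hp).1]
      exact hN3 j' p hp
    · have hd := Finset.disjoint_left.mp (hdisj hne)
      rw [key2 p.2 p.1 (P j') (fun h => hd h (hmem2 j p hp).1)
        (fun h => hd h (hmem1 j p hp).1)]
      exact hI j'
  · intro v hv hcov j'
    obtain ⟨j, hvj⟩ := hcover v
    rcases eq_or_ne j' j with rfl | hne
    · rw [key3 v j' hvj]
      refine hN4 j' v ?_ ?_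
      · rw [hsd' j', Finset.mem_inter]; exact ⟨hv, hvj⟩
      · intro p hp
        exact hcov p (Finset.mem_biUnion.mpr ⟨j', Finset.mem_univ _, hp⟩)
    · have hd := Finset.disjoint_left.mp (hdisj hne)
      rw [key4 v (P j') (fun h => hd h hvj)]
      exact hI j'
  · intro p hp
    obtain ⟨j, _, hp⟩ := Finset.mem_biUnion.mp hp
    exact ⟨j, (hmem1 j p hp).1, (hmem2 j p hp).1⟩
  · intro j
    have hfilter : (Finset.univ.biUnion N).filter (fun p => p.1 ∈ P j) = N j := by
      apply Finset.Subset.antisymm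
      · intro p hp
        rw [Finset.mem_filter] at hp
        obtain ⟨j', _, hp'⟩ := Finset.mem_biUnion.mp hp.1
        rcases eq_or_ne j j' with rfl | hne
        · exact hp'
        · have hd := Finset.disjoint_left.mp (hdisj hne)
          exact absurd (hmem1 j' p hp').1 (hd hp.2)
      · intro p hp
        exact Finset.mem_filter.mpr
          ⟨Finset.mem_biUnion.mpr ⟨j, Finset.mem_univ _, hp⟩, (hmem1 j p hp).1⟩
    rw [hfilter, hN5 j, hsd j, hsd' j, Finset.inter_comm (I \ J), Finset.inter_comm (J \ I)]
end

section
/- Let M = (S, 𝓘) be a matroid with rank function r, and let I, J ∈ 𝓘 both satisfy |I ∩ C| = r(C) and |J ∩ C| = r(C) for a fixed subset C ⊆ S. Suppose N is a pairing between I \ J and J \ I such that I - u + v ∈ 𝓘 for every pair uv ∈ N, and every v ∈ J \ I not covered by N satisfies I + v ∈ 𝓘. Then every element of (J \ I) ∩ C is paired by N with an element of (I \ J) ∩ C, and in particular N restricted to C contains a perfect matching between (I \ J) ∩ C and (J \ I) ∩ C. -/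
/-- Let `I, J` be independent sets of a matroid with rank function `r`, both spanning a set
`C` (`|I ∩ C| = |J ∩ C| = r C`).  If `N` is a pairing between `I \ J` and `J \ I` such that
`I - u + v` is independent for every pair `uv ∈ N` and `I + v` is independent for every
uncovered `v ∈ J \ I`, then every element of `(J \ I) ∩ C` is paired by `N` with an element
of `(I \ J) ∩ C`; in particular `N` restricted to `C` contains a perfect matching between
`(I \ J) ∩ C` and `(J \ I) ∩ C`. -/
theorem stmt_13 {α : Type*} [DecidableEq α]
    (Indep : Finset α → Prop)
    (h_ne : ∃ I, Indep I)
    (h_down : ∀ I I' : Finset α, Indep I → I' ⊆ I → Indep I')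
    (h_aug : ∀ I I' : Finset α, Indep I → Indep I' → I'.card < I.card →
      ∃ x ∈ I \ I', Indep (insert x I'))
    (r : Finset α → ℕ)
    (hr : ∀ X : Finset α, (∃ Z, Z ⊆ X ∧ Indep Z ∧ Z.card = r X) ∧
      ∀ Z, Z ⊆ X → Indep Z → Z.card ≤ r X)
    (I J : Finset α) (hI : Indep I) (hJ : Indep J)
    (C : Finset α) (hIC : (I ∩ C).card = r C) (hJC : (J ∩ C).card = r C)
    (N : Finset (α × α))
    (hNmem : ∀ p ∈ N, p.1 ∈ I \ J ∧ p.2 ∈ J \ I)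
    (hNmatch : ∀ p ∈ N, ∀ q ∈ N, p ≠ q → p.1 ≠ q.1 ∧ p.2 ≠ q.2)
    (hFP1 : ∀ p ∈ N, Indep (insert p.2 (I.erase p.1)))
    (hFP2 : ∀ v ∈ J \ I, (∀ p ∈ N, p.2 ≠ v) → Indep (insert v I)) :
    (∀ v ∈ (J \ I) ∩ C, ∃ p ∈ N, p.2 = v ∧ p.1 ∈ (I \ J) ∩ C) ∧
      (∀ u ∈ (I \ J) ∩ C, ∃ p ∈ N, p.1 = u ∧ p.2 ∈ (J \ I) ∩ C) := by
  classical
  -- spanning lemma: no element of C \ I can be added to a superset of I ∩ C inside C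
  have hspan : ∀ v ∈ C, v ∉ I → ∀ W : Finset α, I ∩ C ⊆ W → Indep (insert v W) → False := by
    intro v hvC hvI W hW hind
    have hZ : Indep (insert v (I ∩ C)) :=
      h_down _ _ hind (Finset.insert_subset_insert _ hW)
    have hsub : insert v (I ∩ C) ⊆ C := by
      intro x hx
      rcases Finset.mem_insert.1 hx with h | h
      · exact h ▸ hvC
      · exact (Finset.mem_inter.1 h).2
    have hcard : (insert v (I ∩ C)).card = r C + 1 := by
      rw [Finset.card_insert_of_notMem (fun h => hvI (Finset.mem_inter.1 h).1), hIC]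
    have := (hr C).2 _ hsub hZ
    omega
  -- uniqueness of pairs with given second coordinate
  have hUniq : ∀ p ∈ N, ∀ q ∈ N, p.2 = q.2 → p = q := by
    intro p hp q hq h
    by_contra hne
    exact (hNmatch p hp q hq hne).2 h
  have hUniq1 : ∀ p ∈ N, ∀ q ∈ N, p.1 = q.1 → p = q := by
    intro p hp q hq h
    by_contra hne
    exact (hNmatch p hp q hq hne).1 h
  -- Part 1
  have part1 : ∀ v ∈ (J \ I) ∩ C, ∃ p ∈ N, p.2 = v ∧ p.1 ∈ (I \ J) ∩ C := by
    intro v hv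
    obtain ⟨hvJI, hvC⟩ := Finset.mem_inter.1 hv
    have hvI : v ∉ I := (Finset.mem_sdiff.1 hvJI).2
    -- v must be covered
    have hcov : ∃ p ∈ N, p.2 = v := by
      by_contra h
      push_neg at h
      have := hFP2 v hvJI h
      exact hspan v hvC hvI I (Finset.inter_subset_left) this
    obtain ⟨p, hp, hpv⟩ := hcov
    refine ⟨p, hp, hpv, ?_⟩
    have hp1 : p.1 ∈ I \ J := (hNmem p hp).1
    refine Finset.mem_inter.2 ⟨hp1, ?_⟩
    -- p.1 ∈ C, else contradiction
    by_contra hp1C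
    have hsub : I ∩ C ⊆ I.erase p.1 := by
      intro x hx
      obtain ⟨hxI, hxC⟩ := Finset.mem_inter.1 hx
      exact Finset.mem_erase.2 ⟨fun h => hp1C (h ▸ hxC), hxI⟩
    exact hspan v hvC hvI _ hsub (hpv ▸ hFP1 p hp)
  refine ⟨part1, ?_⟩
  -- Part 2: counting
  set T := (J \ I) ∩ C with hT
  set U := (I \ J) ∩ C with hU
  have hcardTU : U.card = T.card := by
    have h1 : (I ∩ C) \ (J ∩ C) = U := by
      ext x
      simp only [hU, Finset.mem_sdiff, Finset.mem_inter]
      tauto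
    have h2 : (J ∩ C) \ (I ∩ C) = T := by
      ext x
      simp only [hT, Finset.mem_sdiff, Finset.mem_inter]
      tauto
    rw [← h1, ← h2]
    exact Finset.card_sdiff_comm (hIC.trans hJC.symm)
  set S1 := N.filter (fun p => p.2 ∈ T) with hS1
  have hcardS1 : S1.card = T.card := by
    apply Finset.card_bij (fun p _ => p.2)
    · intro p hp
      exact (Finset.mem_filter.1 hp).2
    · intro p hp q hq h
      exact hUniq p (Finset.mem_filter.1 hp).1 q (Finset.mem_filter.1 hq).1 h
    · intro v hv
      obtain ⟨p, hp, hpv, _⟩ := part1 v hv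
      exact ⟨p, Finset.mem_filter.2 ⟨hp, hpv ▸ hv⟩, hpv⟩
  have himg : S1.image (·.1) = U := by
    apply Finset.eq_of_subset_of_card_le
    · intro u hu
      obtain ⟨p, hp, hpu⟩ := Finset.mem_image.1 hu
      obtain ⟨hpN, hpT⟩ := Finset.mem_filter.1 hp
      obtain ⟨q, hq, hq2, hq1⟩ := part1 p.2 hpT
      have : q = p := hUniq q hq p hpN hq2
      exact hpu ▸ this ▸ hq1
    · rw [hcardTU, ← hcardS1]
      apply Finset.card_le_card_of_injOn (·.1)
      · exact fun p hp => Finset.mem_image_of_mem _ hp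
      · intro p hp q hq h
        exact hUniq1 p (Finset.mem_filter.1 hp).1 q (Finset.mem_filter.1 hq).1 h
  intro u hu
  rw [← himg] at hu
  obtain ⟨p, hp, hpu⟩ := Finset.mem_image.1 hu
  obtain ⟨hpN, hpT⟩ := Finset.mem_filter.1 hp
  exact ⟨p, hpN, hpu, hpT⟩
end

section
/- Consider a cycle C on corner vertices v₁, ..., v_{2K} where each edge (v_i, v_{i+1}) is an ℓ-special edge (a path with 2ℓ inner connector vertices), each v_i prefers its neighbor in e(v_i, v_{i+1}) to its neighbor in e(v_{i-1}, v_i), and within each special edge, paired connector vertices prefer each other first and their other neighbor second. Let 2ℓK < k < (2ℓ+1)K be an integer and ℓ ≥ 2. Then there is no matching M with |M| ≥ k such that Δ(M, N) ≥ 0 for every matching N with |N| ≥ k. -/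
/-! The no-instance cycle gadget (Lemma 5.4).  The cycle `C` has `2K` corner vertices
`v_0, ..., v_{2K-1}` (here `K = K' + 1 ≥ 1`, forced by `2ℓK < k < (2ℓ+1)K`), and each edge
`(v_i, v_{i+1})` is an `ℓ`-special edge, i.e. a path with `2ℓ` inner connector vertices
`(i, 0, 0), (i, 0, 1), ..., (i, ℓ-1, 0), (i, ℓ-1, 1)` (here `ℓ = l + 2 ≥ 2`).
Connectors `(i, h, 0)` and `(i, h, 1)` rank each other first and their other path-neighbor
second; corner `v_i` prefers its neighbor `(i, 0, 0)` in `e(v_i, v_{i+1})` to its neighbor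
`(i-1, ℓ-1, 1)` in `e(v_{i-1}, v_i)`.  There is no matching `M` with `|M| ≥ k` such that
`Δ(M, N) ≥ 0` for every matching `N` with `|N| ≥ k`. -/

/-- The vertex set: corners `Fin (2K)` plus connectors. -/
abbrev GadgetV (K l : ℕ) : Type := Fin (2 * K + 2) ⊕ (Fin (2 * K + 2) × Fin (l + 2) × Fin 2)

/-- The most preferred neighbor of each vertex. -/
def gadgetBest (K l : ℕ) : GadgetV K l → GadgetV K l
  | Sum.inl i => Sum.inr (i, 0, 0)
  | Sum.inr (i, h, b) => if b = 0 then Sum.inr (i, h, 1) else Sum.inr (i, h, 0)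

/-- The second (least) preferred neighbor of each vertex. -/
def gadgetSecond (K l : ℕ) : GadgetV K l → GadgetV K l
  | Sum.inl i => Sum.inr (i - 1, Fin.last (l + 1), 1)
  | Sum.inr (i, h, b) =>
      if b = 0 then (if h = 0 then Sum.inl i else Sum.inr (i, h - 1, 1))
      else (if h = Fin.last (l + 1) then Sum.inl (i + 1) else Sum.inr (i, h + 1, 0))

/-- A matching in the gadget graph: a symmetric partial pairing along the edges of the cycle
of special edges. -/
def GadgetMatching (K l : ℕ) (M : GadgetV K l → Option (GadgetV K l)) : Prop :=
  (∀ u v, M u = some v → M v = some u) ∧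
    (∀ u v, M u = some v → v = gadgetBest K l u ∨ v = gadgetSecond K l u)

/-- Twice the number of edges of a matching, i.e. the number of matched vertices. -/
def gadgetMSize (K l : ℕ) (M : GadgetV K l → Option (GadgetV K l)) : ℕ :=
  (Finset.univ.filter fun v : GadgetV K l => (M v).isSome).card

/-- The rank a vertex `v` assigns to its partner: `0` for its best neighbor, `1` for its
second neighbor, `2` for being unmatched. -/
def gadgetRank (K l : ℕ) (v : GadgetV K l) : Option (GadgetV K l) → ℕ
  | none => 2
  | some u => if u = gadgetBest K l v then 0 else 1

/-- `Δ(M, N)`: the number of vertices preferring `M` minus the number preferring `N`. -/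
def gadgetDelta (K l : ℕ) (M N : GadgetV K l → Option (GadgetV K l)) : ℤ :=
  ∑ v : GadgetV K l,
    (if gadgetRank K l v (M v) < gadgetRank K l v (N v) then (1 : ℤ)
     else if gadgetRank K l v (N v) < gadgetRank K l v (M v) then -1 else 0)

namespace NoPop

variable (K l : ℕ)

def L : ℕ := 2 * l + 5
def C : ℕ := 2 * K + 2
def n : ℕ := C K * L l

lemma L_def : L l = 2 * l + 5 := rfl
lemma C_def : C K = 2 * K + 2 := rfl
lemma L_pos : 0 < L l := by rw [L_def]; omega
lemma C_pos : 0 < C K := by rw [C_def]; omega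
lemma n_pos : 0 < n K l := Nat.mul_pos (C_pos K) (L_pos l)
lemma n_eq : n K l = C K * L l := rfl
lemma n_big : 2 * L l ≤ n K l := by
  rw [n_eq]; exact Nat.mul_le_mul_right _ (by rw [C_def]; omega)

/-- vertex at cycle position `s` (periodic with period `n`). -/
def vtx (s : ℕ) : GadgetV K l :=
  if h : s % L l = 0 then Sum.inl ⟨s / L l % C K, Nat.mod_lt _ (C_pos K)⟩
  else Sum.inr (⟨s / L l % C K, Nat.mod_lt _ (C_pos K)⟩,
    ⟨(s % L l - 1) / 2, by
      have h1 : s % L l < L l := Nat.mod_lt _ (L_pos l)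
      have h2 : L l = 2 * l + 5 := rfl
      omega⟩,
    ⟨(s % L l - 1) % 2, by omega⟩)

def idx : GadgetV K l → ℕ
  | Sum.inl i => i.val * L l
  | Sum.inr (i, h, b) => i.val * L l + 2 * h.val + 1 + b.val

lemma idx_lt (u : GadgetV K l) : idx K l u < n K l := by
  have key : ∀ i r : ℕ, i < C K → r < L l → i * L l + r < n K l := by
    intro i r hi hr
    calc i * L l + r < i * L l + L l := by omega
      _ = (i + 1) * L l := by ring
      _ ≤ C K * L l := Nat.mul_le_mul_right _ (by omega)
      _ = n K l := rfl
  cases u with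
  | inl i => have := key i.val 0 i.isLt (L_pos l); simpa [idx] using this
  | inr p =>
      obtain ⟨i, h, b⟩ := p
      have hh := h.isLt; have hb := b.isLt
      have hL2 : L l = 2 * l + 5 := rfl
      have := key i.val (2 * h.val + 1 + b.val) i.isLt (by omega)
      simp only [idx]
      omega

lemma seg_mod (Lv i r : ℕ) (hr : r < Lv) : (i * Lv + r) % Lv = r := by
  rw [mul_comm, Nat.mul_add_mod, Nat.mod_eq_of_lt hr]

lemma seg_div (Lv i r : ℕ) (hr : r < Lv) : (i * Lv + r) / Lv = i := by
  rw [mul_comm, Nat.mul_add_div (by omega : 0 < Lv), Nat.div_eq_of_lt hr, add_zero]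

lemma vtx_idx (u : GadgetV K l) : vtx K l (idx K l u) = u := by
  cases u with
  | inl i =>
      show vtx K l (i.val * L l) = Sum.inl i
      have hm : (i.val * L l) % L l = 0 := by simpa using seg_mod (L l) i.val 0 (L_pos l)
      have hd : (i.val * L l) / L l = i.val := by simpa using seg_div (L l) i.val 0 (L_pos l)
      unfold vtx
      rw [dif_pos hm]
      congr 1
      exact Fin.ext (by
        show ↑i * L l / L l % C K = ↑i
        rw [hd]; exact Nat.mod_eq_of_lt i.isLt)
  | inr p =>
      obtain ⟨i, h, b⟩ := p
      have hh := h.isLt; have hb := b.isLt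
      have hL2 : L l = 2 * l + 5 := rfl
      show vtx K l (i.val * L l + 2 * h.val + 1 + b.val) = Sum.inr (i, h, b)
      have e : i.val * L l + 2 * h.val + 1 + b.val = i.val * L l + (2 * h.val + 1 + b.val) := by
        ring
      have hrlt : 2 * h.val + 1 + b.val < L l := by omega
      have hm : (i.val * L l + (2 * h.val + 1 + b.val)) % L l = 2 * h.val + 1 + b.val :=
        seg_mod (L l) _ _ hrlt
      have hd : (i.val * L l + (2 * h.val + 1 + b.val)) / L l = i.val := seg_div (L l) _ _ hrlt
      rw [e]
      unfold vtx
      rw [dif_neg (by rw [hm]; omega)]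
      congr 1
      refine Prod.ext ?_ (Prod.ext ?_ ?_)
      · exact Fin.ext (by
          show (↑i * L l + (2 * ↑h + 1 + ↑b)) / L l % C K = ↑i
          rw [hd]; exact Nat.mod_eq_of_lt i.isLt)
      · exact Fin.ext (by
          show ((↑i * L l + (2 * ↑h + 1 + ↑b)) % L l - 1) / 2 = ↑h
          rw [hm]; omega)
      · exact Fin.ext (by
          show ((↑i * L l + (2 * ↑h + 1 + ↑b)) % L l - 1) % 2 = ↑b
          rw [hm]; omega)

lemma idx_vtx (s : ℕ) : idx K l (vtx K l s) = s % n K l := by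
  have hmm : s % n K l = s % L l + (s / L l % C K) * L l := by
    rw [n_eq, mul_comm (C K) (L l), Nat.mod_mul, mul_comm (L l) _]
  unfold vtx
  by_cases h : s % L l = 0
  · rw [dif_pos h]; simp only [idx]; omega
  · rw [dif_neg h]; simp only [idx]
    have h1 : s % L l < L l := Nat.mod_lt _ (L_pos l)
    omega

lemma vtx_inj {a b : ℕ} (h : vtx K l a = vtx K l b) : a % n K l = b % n K l := by
  have := congrArg (idx K l) h
  rwa [idx_vtx, idx_vtx] at this

lemma vtx_congr {a b : ℕ} (h : a % n K l = b % n K l) : vtx K l a = vtx K l b := by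
  have hmod : ∀ t : ℕ, vtx K l (t + n K l) = vtx K l t := by
    intro t
    have e1 : (t + n K l) % L l = t % L l := by
      rw [n_eq, mul_comm (C K) (L l)]; exact Nat.add_mul_mod_self_left t (L l) (C K)
    have e2 : (t + n K l) / L l % C K = t / L l % C K := by
      rw [n_eq, mul_comm (C K) (L l), Nat.add_mul_div_left _ _ (L_pos l), Nat.add_mod_right]
    unfold vtx
    by_cases hc : t % L l = 0
    · rw [dif_pos (by omega), dif_pos hc]; congr 1
      exact Fin.ext (by show (t + n K l) / L l % C K = t / L l % C K; rw [e2])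
    · rw [dif_neg (by omega), dif_neg hc]
      congr 1
      refine Prod.ext ?_ (Prod.ext ?_ ?_)
      · exact Fin.ext (by show (t + n K l) / L l % C K = t / L l % C K; rw [e2])
      · exact Fin.ext (by
          show ((t + n K l) % L l - 1) / 2 = (t % L l - 1) / 2
          rw [e1])
      · exact Fin.ext (by
          show ((t + n K l) % L l - 1) % 2 = (t % L l - 1) % 2
          rw [e1])
  have h1 : ∀ s : ℕ, vtx K l s = vtx K l (s % n K l) := by
    intro s
    conv_lhs => rw [← Nat.mod_add_div s (n K l)]
    induction s / n K l with
    | zero => simp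
    | succ m ih => rw [Nat.mul_succ, ← add_assoc, hmod]; exact ih
  rw [h1 a, h, ← h1 b]

lemma vtx_add_n (s : ℕ) : vtx K l (s + n K l) = vtx K l s := by
  apply vtx_congr; simp

lemma succ_nowrap (l s : ℕ) (h : s % L l < L l - 1) :
    (s + 1) % L l = s % L l + 1 ∧ (s + 1) / L l = s / L l := by
  have h0 : s % L l + L l * (s / L l) = s := Nat.mod_add_div s (L l)
  have hL := L_pos l
  have e : s + 1 = (s % L l + 1) + L l * (s / L l) := by omega
  constructor
  · rw [e, Nat.add_mul_mod_self_left, Nat.mod_eq_of_lt (by omega)]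
  · rw [e, Nat.add_mul_div_left _ _ (L_pos l), Nat.div_eq_of_lt (by omega), zero_add]

lemma succ_wrap (l s : ℕ) (h : s % L l = L l - 1) :
    (s + 1) % L l = 0 ∧ (s + 1) / L l = s / L l + 1 := by
  have h0 : s % L l + L l * (s / L l) = s := Nat.mod_add_div s (L l)
  have hL := L_pos l
  have e : s + 1 = 0 + L l * (s / L l + 1) := by
    have h2 : L l * (s / L l + 1) = L l * (s / L l) + L l := by ring
    omega
  constructor
  · rw [e, Nat.add_mul_mod_self_left, Nat.zero_mod]
  · rw [e, Nat.add_mul_div_left _ _ (L_pos l), Nat.zero_div, zero_add]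

lemma pred_wrap (l s : ℕ) (h : (s + 1) % L l = 0) :
    s % L l = L l - 1 ∧ s / L l = (s + 1) / L l - 1 ∧ 1 ≤ (s + 1) / L l := by
  have h0 : (s + 1) % L l + L l * ((s + 1) / L l) = s + 1 := Nat.mod_add_div _ _
  have hL := L_pos l
  have hq : 1 ≤ (s + 1) / L l := by
    rcases Nat.eq_zero_or_pos ((s + 1) / L l) with h1 | h1
    · rw [h1] at h0; omega
    · exact h1
  obtain ⟨q', hq'⟩ : ∃ q', (s + 1) / L l = q' + 1 := ⟨(s + 1) / L l - 1, by omega⟩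
  have h2 : L l * (q' + 1) = q' * L l + L l := by ring
  have e : s = q' * L l + (L l - 1) := by rw [hq'] at h0; omega
  refine ⟨?_, ?_, hq⟩
  · rw [e, seg_mod _ _ _ (by omega)]
  · rw [hq']
    conv_lhs => rw [e]
    rw [seg_div (L l) q' (L l - 1) (by omega)]
    omega

lemma pred_mod (Cv q : ℕ) (hC : 0 < Cv) (hq : 1 ≤ q) :
    (Cv - 1 + q % Cv) % Cv = (q - 1) % Cv := by
  have h1 : (Cv - 1 + q % Cv) % Cv = (Cv - 1 + q) % Cv := by
    conv_lhs => rw [Nat.add_mod]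
    conv_rhs => rw [Nat.add_mod]
    rw [Nat.mod_mod_of_dvd _ (dvd_refl _)]
  rw [h1, show Cv - 1 + q = (q - 1) + Cv by omega, Nat.add_mod_right]

def fwdP (r : ℕ) : Prop := r % 2 = 1 ∨ r = 0

instance (r : ℕ) : Decidable (fwdP r) := by unfold fwdP; infer_instance

lemma vC1 (K : ℕ) : (1 : Fin (2 * K + 2)).val = 1 := by simp

lemma vl1 (l : ℕ) : (1 : Fin (l + 2)).val = 1 := by simp

lemma best_vtx (K l s : ℕ) (h : fwdP (s % L l)) :
    gadgetBest K l (vtx K l s) = vtx K l (s + 1) := by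
  have hL : L l = 2 * l + 5 := rfl
  have hr : s % L l < L l := Nat.mod_lt _ (L_pos l)
  rcases h with hodd | h0
  · have hrne : s % L l ≠ 0 := by omega
    have hnw : s % L l < L l - 1 := by omega
    obtain ⟨e1, e2⟩ := succ_nowrap l s hnw
    unfold vtx
    rw [dif_neg hrne, dif_neg (by omega)]
    simp only [gadgetBest]
    split_ifs with hb
    · congr 1
      refine Prod.ext ?_ (Prod.ext ?_ ?_)
      · exact Fin.ext (by show s / L l % C K = (s + 1) / L l % C K; rw [e2])
      · exact Fin.ext (by
          show (s % L l - 1) / 2 = ((s + 1) % L l - 1) / 2; rw [e1]; omega)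
      · exact Fin.ext (by
          show (1 : Fin 2).val = ((s + 1) % L l - 1) % 2; rw [e1]
          show 1 = (s % L l + 1 - 1) % 2; omega)
    · exact absurd (Fin.ext (by show (s % L l - 1) % 2 = 0; omega)) hb
  · have hnw : s % L l < L l - 1 := by omega
    obtain ⟨e1, e2⟩ := succ_nowrap l s hnw
    unfold vtx
    rw [dif_pos h0, dif_neg (by omega)]
    simp only [gadgetBest]
    congr 1
    refine Prod.ext ?_ (Prod.ext ?_ ?_)
    · exact Fin.ext (by show s / L l % C K = (s + 1) / L l % C K; rw [e2])
    · exact Fin.ext (by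
        show (0 : Fin (l+2)).val = ((s + 1) % L l - 1) / 2
        rw [e1, h0]; rfl)
    · exact Fin.ext (by
        show (0 : Fin 2).val = ((s + 1) % L l - 1) % 2
        rw [e1, h0]; rfl)

lemma second_vtx (K l s : ℕ) (h : ¬ fwdP (s % L l)) :
    gadgetSecond K l (vtx K l s) = vtx K l (s + 1) := by
  have hL : L l = 2 * l + 5 := rfl
  have hr : s % L l < L l := Nat.mod_lt _ (L_pos l)
  unfold fwdP at h
  push_neg at h
  obtain ⟨hev, hne⟩ := h
  have hev2 : s % L l % 2 = 0 := by omega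
  -- r even, 2 ≤ r ≤ L - 1
  by_cases hwrap : s % L l = L l - 1
  · -- r = L - 1 : second (inr (i, last, 1)) = inl (i+1)
    obtain ⟨e1, e2⟩ := succ_wrap l s hwrap
    unfold vtx
    rw [dif_neg (by omega), dif_pos e1]
    simp only [gadgetSecond]
    rw [if_neg ?bne, if_pos ?hlast]
    case bne =>
      intro hcon
      have := congrArg Fin.val hcon
      simp only [Fin.val_zero] at this
      omega
    case hlast =>
      exact Fin.ext (by
        show (s % L l - 1) / 2 = l + 1
        omega)
    · congr 1
      exact Fin.ext (by
        rw [Fin.val_add, vC1]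
        show (s / L l % C K + 1) % C K = (s + 1) / L l % C K
        rw [e2]
        conv_rhs => rw [Nat.add_mod]
        rw [Nat.mod_eq_of_lt (show (1:ℕ) < C K by rw [C_def]; omega)])
  · -- r even, 2 ≤ r < L - 1 : second (inr (i, h, 1)) = inr (i, h+1, 0)
    obtain ⟨e1, e2⟩ := succ_nowrap l s (by omega)
    unfold vtx
    rw [dif_neg (by omega), dif_neg (by omega)]
    simp only [gadgetSecond]
    rw [if_neg ?bne2, if_neg ?nlast]
    case bne2 =>
      intro hcon
      have := congrArg Fin.val hcon
      simp only [Fin.val_zero] at this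
      omega
    case nlast =>
      intro hcon
      have := congrArg Fin.val hcon
      simp only [Fin.val_last] at this
      omega
    · congr 1
      refine Prod.ext ?_ (Prod.ext ?_ ?_)
      · exact Fin.ext (by show s / L l % C K = (s + 1) / L l % C K; rw [e2])
      · exact Fin.ext (by
          rw [Fin.val_add, vl1]
          show ((s % L l - 1) / 2 + 1) % (l + 2) = ((s + 1) % L l - 1) / 2
          rw [e1, Nat.mod_eq_of_lt (by omega)]
          omega)
      · exact Fin.ext (by
          show (0 : Fin 2).val = ((s + 1) % L l - 1) % 2
          rw [e1]
          show 0 = (s % L l + 1 - 1) % 2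
          omega)

lemma second_vtx' (K l s : ℕ) (h : fwdP ((s + 1) % L l)) :
    gadgetSecond K l (vtx K l (s + 1)) = vtx K l s := by
  have hL : L l = 2 * l + 5 := rfl
  have hr : (s + 1) % L l < L l := Nat.mod_lt _ (L_pos l)
  rcases h with hodd | h0
  · -- r' odd : r' = 1 or r' ≥ 3
    have hne : (s + 1) % L l ≠ 0 := by omega
    obtain ⟨f1, f2, f3⟩ : s % L l = (s + 1) % L l - 1 ∧ s / L l = (s + 1) / L l ∧
        s % L l < L l - 1 := by
      have hx : s % L l < L l := Nat.mod_lt _ (L_pos l)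
      by_cases hw : s % L l = L l - 1
      · obtain ⟨g1, _⟩ := succ_wrap l s hw; omega
      · obtain ⟨g1, g2⟩ := succ_nowrap l s (by omega)
        exact ⟨by omega, g2.symm ▸ rfl, by omega⟩
    by_cases h1 : (s + 1) % L l = 1
    · -- vertex (i,0,0), second = inl i
      unfold vtx
      rw [dif_neg hne, dif_pos (by omega)]
      simp only [gadgetSecond]
      rw [if_pos ?b0, if_pos ?h0]
      case b0 => exact Fin.ext (by show ((s+1) % L l - 1) % 2 = 0; omega)
      case h0 => exact Fin.ext (by show ((s+1) % L l - 1) / 2 = 0; omega)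
      · congr 1
        exact Fin.ext (by show (s+1) / L l % C K = s / L l % C K; rw [f2])
    · -- r' odd ≥ 3 : vertex (i,h',0), second = inr (i, h'-1, 1)
      unfold vtx
      rw [dif_neg hne, dif_neg (by omega)]
      simp only [gadgetSecond]
      rw [if_pos ?b0', if_neg ?hne0]
      case b0' => exact Fin.ext (by show ((s+1) % L l - 1) % 2 = 0; omega)
      case hne0 =>
        intro hcon
        have := congrArg Fin.val hcon
        simp only [Fin.val_zero] at this
        have : ((s+1) % L l - 1) / 2 = 0 := this
        omega
      · congr 1
        refine Prod.ext ?_ (Prod.ext ?_ ?_)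
        · exact Fin.ext (by show (s+1) / L l % C K = s / L l % C K; rw [f2])
        · exact Fin.ext (by
            rw [Fin.sub_def]
            show (l + 2 - (1 : Fin (l+2)).val + ((s+1) % L l - 1) / 2) % (l + 2)
              = (s % L l - 1) / 2
            rw [vl1]
            rw [← Nat.mod_eq_of_lt (show ((s+1) % L l - 1) / 2 < l + 2 by omega)]
            rw [pred_mod _ _ (by omega) (by omega)]
            rw [Nat.mod_eq_of_lt (by omega)]
            omega)
        · exact Fin.ext (by show (1 : Fin 2).val = (s % L l - 1) % 2; show 1 = _; omega)
  · -- r' = 0 : vertex is corner inl i', second = inr (i'-1, last, 1)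
    obtain ⟨g1, g2, g3⟩ := pred_wrap l s h0
    unfold vtx
    rw [dif_pos h0, dif_neg (by omega)]
    simp only [gadgetSecond]
    congr 1
    refine Prod.ext ?_ (Prod.ext ?_ ?_)
    · exact Fin.ext (by
        rw [Fin.sub_def]
        show (2 * K + 2 - (1 : Fin (2 * K + 2)).val + (s+1) / L l % C K) % C K
          = s / L l % C K
        rw [vC1]
        show (C K - 1 + (s+1) / L l % C K) % C K = s / L l % C K
        rw [pred_mod _ _ (C_pos K) g3, g2])
    · exact Fin.ext (by
        show (Fin.last (l+1)).val = (s % L l - 1) / 2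
        rw [Fin.val_last]
        omega)
    · exact Fin.ext (by show (1 : Fin 2).val = (s % L l - 1) % 2; show 1 = _; omega)

lemma best_vtx' (K l s : ℕ) (h : ¬ fwdP ((s + 1) % L l)) :
    gadgetBest K l (vtx K l (s + 1)) = vtx K l s := by
  have hL : L l = 2 * l + 5 := rfl
  have hr : (s + 1) % L l < L l := Nat.mod_lt _ (L_pos l)
  unfold fwdP at h
  push_neg at h
  obtain ⟨hev, hne⟩ := h
  have hev2 : (s + 1) % L l % 2 = 0 := by omega
  obtain ⟨f1, f2⟩ : s % L l = (s + 1) % L l - 1 ∧ s / L l = (s + 1) / L l := by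
    have hx : s % L l < L l := Nat.mod_lt _ (L_pos l)
    by_cases hw : s % L l = L l - 1
    · obtain ⟨g1, _⟩ := succ_wrap l s hw; omega
    · obtain ⟨g1, g2⟩ := succ_nowrap l s (by omega); omega
  unfold vtx
  rw [dif_neg hne, dif_neg (by omega)]
  simp only [gadgetBest]
  rw [if_neg ?bne]
  case bne =>
    intro hcon
    have := congrArg Fin.val hcon
    simp only [Fin.val_zero] at this
    have : ((s+1) % L l - 1) % 2 = 0 := this
    omega
  · congr 1
    refine Prod.ext ?_ (Prod.ext ?_ ?_)
    · exact Fin.ext (by show (s+1) / L l % C K = s / L l % C K; rw [f2])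
    · exact Fin.ext (by show ((s+1) % L l - 1) / 2 = (s % L l - 1) / 2; omega)
    · exact Fin.ext (by show (0 : Fin 2).val = (s % L l - 1) % 2; show 0 = _; omega)

lemma mod_L_add_n (K l s : ℕ) : (s + n K l) % L l = s % L l := by
  rw [n_eq, mul_comm (C K) (L l)]; exact Nat.add_mul_mod_self_left s (L l) (C K)

lemma mod_ne (K l : ℕ) {a b : ℕ} (hlt : a ≤ b) (hd : b - a < n K l) (h0 : 0 < b - a) :
    a % n K l ≠ b % n K l := by
  intro h
  have hdvd : n K l ∣ b - a := (Nat.modEq_iff_dvd' hlt).mp h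
  exact absurd (Nat.le_of_dvd h0 hdvd) (by omega)

lemma vtx_ne (K l : ℕ) {a b : ℕ} (hlt : a ≤ b) (hd : b - a < n K l) (h0 : 0 < b - a) :
    vtx K l a ≠ vtx K l b := fun h => mod_ne K l hlt hd h0 (vtx_inj K l h)

lemma n_ge (K l : ℕ) : 10 ≤ n K l := by
  have h1 : L l = 2 * l + 5 := rfl
  have h2 : C K = 2 * K + 2 := rfl
  calc (10 : ℕ) = 2 * 5 := rfl
    _ ≤ C K * L l := Nat.mul_le_mul (by omega) (by omega)
    _ = n K l := rfl

lemma second_eq (K l s : ℕ) (h : fwdP (s % L l)) :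
    gadgetSecond K l (vtx K l s) = vtx K l (s + n K l - 1) := by
  have hn := n_ge K l
  have e1 : s + n K l - 1 + 1 = s + n K l := by omega
  have h2 : fwdP ((s + n K l - 1 + 1) % L l) := by rw [e1, mod_L_add_n]; exact h
  have h3 := second_vtx' K l (s + n K l - 1) h2
  rwa [e1, vtx_add_n] at h3

lemma best_eq' (K l s : ℕ) (h : ¬ fwdP (s % L l)) :
    gadgetBest K l (vtx K l s) = vtx K l (s + n K l - 1) := by
  have hn := n_ge K l
  have e1 : s + n K l - 1 + 1 = s + n K l := by omega
  have h2 : ¬ fwdP ((s + n K l - 1 + 1) % L l) := by rw [e1, mod_L_add_n]; exact h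
  have h3 := best_vtx' K l (s + n K l - 1) h2
  rwa [e1, vtx_add_n] at h3

/-- rank of the forward partner -/
lemma rank_fwd (K l s : ℕ) :
    gadgetRank K l (vtx K l s) (some (vtx K l (s + 1))) = if fwdP (s % L l) then 0 else 1 := by
  have hn := n_ge K l
  by_cases h : fwdP (s % L l)
  · rw [if_pos h]
    simp only [gadgetRank]
    rw [best_vtx K l s h, if_pos rfl]
  · rw [if_neg h]
    simp only [gadgetRank]
    rw [best_eq' K l s h, if_neg]
    exact vtx_ne K l (by omega) (by omega) (by omega)

/-- rank of the backward partner -/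
lemma rank_bwd (K l s : ℕ) :
    gadgetRank K l (vtx K l s) (some (vtx K l (s + n K l - 1)))
      = if fwdP (s % L l) then 1 else 0 := by
  have hn := n_ge K l
  by_cases h : fwdP (s % L l)
  · rw [if_pos h]
    simp only [gadgetRank]
    rw [best_vtx K l s h, if_neg]
    exact fun hc => vtx_ne K l (show s + 1 ≤ s + n K l - 1 by omega) (by omega) (by omega) hc.symm
  · rw [if_neg h]
    simp only [gadgetRank]
    rw [best_eq' K l s h, if_pos rfl]

section Matching

variable {K l : ℕ} {M : GadgetV K l → Option (GadgetV K l)}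

lemma partner_options (hM : GadgetMatching K l M) (s : ℕ) :
    M (vtx K l s) = none ∨ M (vtx K l s) = some (vtx K l (s + 1)) ∨
      M (vtx K l s) = some (vtx K l (s + n K l - 1)) := by
  cases hml : M (vtx K l s) with
  | none => exact Or.inl rfl
  | some v =>
      rcases hM.2 _ _ hml with hv | hv
      · by_cases h : fwdP (s % L l)
        · exact Or.inr (Or.inl (by rw [hv, best_vtx K l s h]))
        · exact Or.inr (Or.inr (by rw [hv, best_eq' K l s h]))
      · by_cases h : fwdP (s % L l)
        · exact Or.inr (Or.inr (by rw [hv, second_eq K l s h]))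
        · exact Or.inr (Or.inl (by rw [hv, second_vtx K l s h]))

/-- matched edges are never adjacent -/
lemma no_adj (hM : GadgetMatching K l M) (s : ℕ) (h : M (vtx K l s) = some (vtx K l (s + 1))) :
    M (vtx K l (s + 1)) ≠ some (vtx K l (s + 2)) := by
  have hn := n_ge K l
  intro hc
  have h1 := hM.1 _ _ h
  rw [h1] at hc
  have := vtx_inj K l (Option.some_injective _ hc)
  exact mod_ne K l (by omega) (by omega) (by omega) this

/-- backward matching propagates to an `Ed` fact -/
lemma bwd_to_ed (hM : GadgetMatching K l M) (s : ℕ)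
    (h : M (vtx K l s) = some (vtx K l (s + n K l - 1))) :
    M (vtx K l (s + n K l - 1)) = some (vtx K l (s + n K l - 1 + 1)) := by
  have hn := n_ge K l
  have h1 := hM.1 _ _ h
  rw [h1, show s + n K l - 1 + 1 = s + n K l by omega, vtx_add_n]

end Matching

/-! ### The sign function χ and its partial sums -/

def chi (l s : ℕ) : ℤ := if (fwdP (s % L l) ↔ s % 2 = 0) then 1 else -1

lemma succ_mod_nowrap (Mv s : ℕ) (h : s % Mv < Mv - 1) : (s + 1) % Mv = s % Mv + 1 := by
  have h0 : s % Mv + Mv * (s / Mv) = s := Nat.mod_add_div s Mv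
  have e : s + 1 = (s % Mv + 1) + Mv * (s / Mv) := by omega
  rw [e, Nat.add_mul_mod_self_left, Nat.mod_eq_of_lt (by omega)]

lemma succ_mod_wrap (Mv s : ℕ) (h0 : 0 < Mv) (h : s % Mv = Mv - 1) : (s + 1) % Mv = 0 := by
  have h1 : s % Mv + Mv * (s / Mv) = s := Nat.mod_add_div s Mv
  have e : s + 1 = 0 + Mv * (s / Mv + 1) := by
    have h2 : Mv * (s / Mv + 1) = Mv * (s / Mv) + Mv := by ring
    omega
  rw [e, Nat.add_mul_mod_self_left, Nat.zero_mod]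

lemma chi_eq (l s : ℕ) :
    chi l s = if (s % (2 * L l) = 0 ∨ L l < s % (2 * L l)) then 1 else -1 := by
  have hL : L l = 2 * l + 5 := rfl
  set r2 := s % (2 * L l) with hr2
  have h1 : r2 % L l = s % L l := Nat.mod_mod_of_dvd s ⟨2, by ring⟩
  have h2 : r2 % 2 = s % 2 := Nat.mod_mod_of_dvd s ⟨L l, by ring⟩
  have h3 : r2 < 2 * L l := Nat.mod_lt _ (by omega)
  unfold chi fwdP
  by_cases hc : r2 < L l
  · have e : s % L l = r2 := by rw [← h1, Nat.mod_eq_of_lt hc]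
    rw [e]
    split_ifs <;> omega
  · have e : s % L l = r2 - L l := by
      rw [← h1, Nat.mod_eq_sub_mod (by omega), Nat.mod_eq_of_lt (by omega)]
    rw [e]
    split_ifs <;> omega

def gsum (l m : ℕ) : ℤ := ∑ s ∈ Finset.range m, chi l (s + 1)

lemma gsum_eq (l m : ℕ) :
    gsum l m = if m % (2 * L l) ≤ L l then -(((m % (2 * L l) : ℕ)) : ℤ)
      else (((m % (2 * L l) : ℕ)) : ℤ) - 2 * (L l : ℤ) := by
  have hL : L l = 2 * l + 5 := rfl
  induction m with
  | zero => simp [gsum]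
  | succ m ih =>
      have hstep : gsum l (m + 1) = gsum l m + chi l (m + 1) := Finset.sum_range_succ _ _
      have h3 : m % (2 * L l) < 2 * L l := Nat.mod_lt _ (by omega)
      rw [hstep, ih, chi_eq]
      by_cases hw : m % (2 * L l) = 2 * L l - 1
      · have e : (m + 1) % (2 * L l) = 0 := succ_mod_wrap _ _ (by omega) hw
        rw [e]
        rw [if_pos (Or.inl rfl), if_neg (by omega : ¬ (m % (2 * L l) ≤ L l)),
          if_pos (Nat.zero_le _)]
        omega
      · have e : (m + 1) % (2 * L l) = m % (2 * L l) + 1 :=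
          succ_mod_nowrap _ _ (by omega)
        rw [e]
        set r := m % (2 * L l) with hrdef
        rcases lt_trichotomy r (L l) with hlt | heq | hgt
        · rw [if_pos (show r ≤ L l by omega),
            if_neg (show ¬(r + 1 = 0 ∨ L l < r + 1) by omega),
            if_pos (show r + 1 ≤ L l by omega)]
          push_cast
          omega
        · rw [if_pos (show r ≤ L l by omega),
            if_pos (show r + 1 = 0 ∨ L l < r + 1 by omega),
            if_neg (show ¬(r + 1 ≤ L l) by omega)]
          push_cast
          omega
        · rw [if_neg (show ¬(r ≤ L l) by omega),
            if_pos (show r + 1 = 0 ∨ L l < r + 1 by omega),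
            if_neg (show ¬(r + 1 ≤ L l) by omega)]
          push_cast
          omega

lemma gsum_le_neg_one (l m : ℕ) (h : m % 2 = 1) : gsum l m ≤ -1 := by
  have hL : L l = 2 * l + 5 := rfl
  have h2 : m % (2 * L l) % 2 = m % 2 := Nat.mod_mod_of_dvd m ⟨L l, by ring⟩
  have h3 : m % (2 * L l) < 2 * L l := Nat.mod_lt _ (by omega)
  rw [gsum_eq]
  split_ifs with hc <;> omega

lemma gsum_L_sub_one (l : ℕ) : gsum l (L l - 1) = -((L l : ℤ) - 1) := by
  have hL : L l = 2 * l + 5 := rfl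
  rw [gsum_eq, Nat.mod_eq_of_lt (by omega), if_pos (by omega)]
  omega

/-! ### Counting -/

lemma vtx_inj_lt (K l : ℕ) {a b : ℕ} (ha : a < n K l) (hb : b < n K l)
    (h : vtx K l a = vtx K l b) : a = b := by
  have := vtx_inj K l h
  rwa [Nat.mod_eq_of_lt ha, Nat.mod_eq_of_lt hb] at this

lemma mod_eq_cancel (K l : ℕ) {x y : ℕ} (hx : 1 ≤ x) (hx2 : x ≤ n K l) (hy : 1 ≤ y)
    (hy2 : y ≤ n K l) (h : x % n K l = y % n K l) : x = y := by
  have hn := n_pos K l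
  by_cases hxn : x = n K l
  · by_cases hyn : y = n K l
    · omega
    · rw [hxn, Nat.mod_self, Nat.mod_eq_of_lt (by omega)] at h; omega
  · by_cases hyn : y = n K l
    · rw [hyn, Nat.mod_self, Nat.mod_eq_of_lt (by omega)] at h; omega
    · rwa [Nat.mod_eq_of_lt (by omega), Nat.mod_eq_of_lt (by omega)] at h

/-- summation over all vertices can be re-indexed along the cycle from any origin -/
lemma sum_vtx {β : Type*} [AddCommMonoid β] (K l : ℕ) (j0 : ℕ) (hj0 : j0 < n K l)
    (f : GadgetV K l → β) :
    ∑ v : GadgetV K l, f v = ∑ s ∈ Finset.range (n K l), f (vtx K l (j0 + s)) := by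
  have hn := n_pos K l
  have hleft : ∀ u : GadgetV K l, vtx K l (j0 + (idx K l u + n K l - j0) % n K l) = u := by
    intro u
    have h1 : (j0 + (idx K l u + n K l - j0) % n K l) % n K l = idx K l u % n K l := by
      rw [Nat.add_mod_mod, show j0 + (idx K l u + n K l - j0) = idx K l u + n K l by omega,
        Nat.add_mod_right]
    rw [vtx_congr K l h1, vtx_idx]
  refine Finset.sum_nbij' (fun u => (idx K l u + n K l - j0) % n K l)
    (fun s => vtx K l (j0 + s)) (fun u _ => Finset.mem_range.mpr (Nat.mod_lt _ hn))
    (fun s _ => Finset.mem_univ _) (fun u _ => hleft u) ?_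
    (fun u _ => (congrArg f (hleft u)).symm)
  intro s hs
  have hs' := Finset.mem_range.mp hs
  show (idx K l (vtx K l (j0 + s)) + n K l - j0) % n K l = s
  rw [idx_vtx]
  have h2 : (j0 + s) % n K l + n K l - j0 = ((j0 + s) % n K l + (n K l - j0)) := by omega
  rw [h2, Nat.mod_add_mod, show j0 + s + (n K l - j0) = s + n K l by omega,
    Nat.add_mod_right, Nat.mod_eq_of_lt hs']

section Counting

variable (K l : ℕ) (M : GadgetV K l → Option (GadgetV K l))

/-- positions of forward-matched edges -/
noncomputable def EdS : Finset ℕ :=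
  (Finset.range (n K l)).filter
    (fun s => M (vtx K l s) = some (vtx K l (s + 1)))

lemma mem_EdS {s : ℕ} :
    s ∈ EdS K l M ↔ s < n K l ∧ M (vtx K l s) = some (vtx K l (s + 1)) := by
  unfold EdS
  rw [Finset.mem_filter, Finset.mem_range]

end Counting

lemma msize_eq {K l : ℕ} {M : GadgetV K l → Option (GadgetV K l)}
    (hM : GadgetMatching K l M) : gadgetMSize K l M = 2 * (EdS K l M).card := by
  classical
  have hn := n_ge K l
  set A := (EdS K l M).image (vtx K l) with hA
  set B := (EdS K l M).image (fun s => vtx K l (s + 1)) with hB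
  have hinj1 : Set.InjOn (vtx K l) (EdS K l M) := by
    intro a ha b hb hab
    have ha' := (mem_EdS K l M).mp ha
    have hb' := (mem_EdS K l M).mp hb
    exact vtx_inj_lt K l ha'.1 hb'.1 hab
  have hinj2 : Set.InjOn (fun s => vtx K l (s + 1)) (EdS K l M) := by
    intro a ha b hb hab
    have ha' := (mem_EdS K l M).mp ha
    have hb' := (mem_EdS K l M).mp hb
    have := vtx_inj K l hab
    exact Nat.succ_injective (mod_eq_cancel K l (by omega) (by omega) (by omega) (by omega) this)
  have hdisj : Disjoint A B := by
    rw [Finset.disjoint_left]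
    intro u huA huB
    obtain ⟨a, ha, hau⟩ := Finset.mem_image.mp huA
    obtain ⟨b, hb, hbu⟩ := Finset.mem_image.mp huB
    have ha' := (mem_EdS K l M).mp ha
    have hb' := (mem_EdS K l M).mp hb
    have heq := vtx_inj K l (hau.trans hbu.symm)
    have hab : a = b + 1 ∨ (a = 0 ∧ b + 1 = n K l) := by
      by_cases hbn : b + 1 = n K l
      · rw [hbn, Nat.mod_self, Nat.mod_eq_of_lt ha'.1] at heq
        exact Or.inr ⟨heq, hbn⟩
      · rw [Nat.mod_eq_of_lt ha'.1, Nat.mod_eq_of_lt (by omega)] at heq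
        exact Or.inl heq
    rcases hab with hab | ⟨ha0, hbn⟩
    · exact no_adj hM b hb'.2 (by rw [← hab]; rw [hab] at ha' ⊢; exact ha'.2)
    · have e1 : vtx K l (n K l) = vtx K l 0 := by apply vtx_congr; simp
      have e2 : vtx K l (n K l + 1) = vtx K l 1 := by
        apply vtx_congr; rw [Nat.add_comm, Nat.add_mod_right]
      have hM0 : M (vtx K l 0) = some (vtx K l 1) := by
        have := ha'.2
        rwa [ha0] at this
      refine no_adj hM b hb'.2 ?_
      rw [show b + 2 = n K l + 1 by omega, hbn, e1, e2]
      exact hM0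
  have hset : Finset.univ.filter (fun v => (M v).isSome) = A ∪ B := by
    ext v
    simp only [Finset.mem_filter, Finset.mem_univ, true_and, Finset.mem_union]
    constructor
    · intro hv
      rcases partner_options hM (idx K l v) with h0 | h1 | h2
      · rw [vtx_idx] at h0; rw [h0] at hv; simp at hv
      · left
        exact Finset.mem_image.mpr ⟨idx K l v, (mem_EdS K l M).mpr ⟨idx_lt K l v, h1⟩,
          vtx_idx K l v⟩
      · right
        set t := idx K l v + n K l - 1 with ht
        have e3 : vtx K l (t % n K l) = vtx K l t :=
          vtx_congr K l (Nat.mod_mod_of_dvd t (dvd_refl _))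
        have e4 : vtx K l (t % n K l + 1) = vtx K l (t + 1) :=
          vtx_congr K l (by rw [Nat.mod_add_mod])
        have hEd : M (vtx K l (t % n K l)) = some (vtx K l (t % n K l + 1)) := by
          have h3 := bwd_to_ed hM (idx K l v) h2
          rw [e3, e4]
          exact h3
        refine Finset.mem_image.mpr ⟨t % n K l, (mem_EdS K l M).mpr
          ⟨Nat.mod_lt _ (by omega), hEd⟩, ?_⟩
        rw [e4, show t + 1 = idx K l v + n K l by omega, vtx_add_n, vtx_idx]
    · intro hv
      rcases hv with hv | hv
      · obtain ⟨a, ha, hau⟩ := Finset.mem_image.mp hv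
        have ha' := (mem_EdS K l M).mp ha
        rw [← hau, ha'.2]
        rfl
      · obtain ⟨a, ha, hau⟩ := Finset.mem_image.mp hv
        have ha' := (mem_EdS K l M).mp ha
        rw [← hau, hM.1 _ _ ha'.2]
        rfl
  rw [gadgetMSize, hset, Finset.card_union_of_disjoint hdisj,
    Finset.card_image_of_injOn hinj1, Finset.card_image_of_injOn hinj2]
  ring

/-- no two consecutive elements: bound and rigidity -/
lemma path_lemma (m : ℕ) : ∀ S : Finset ℕ, S ⊆ Finset.range (2 * m + 1) →
    (∀ a ∈ S, a + 1 ∉ S) →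
    S.card ≤ m + 1 ∧ (S.card = m + 1 → ∀ t, t ≤ m → 2 * t ∈ S) := by
  induction m with
  | zero =>
      intro S hS hadj
      constructor
      · simpa using Finset.card_le_card hS
      · intro hc t ht
        have : S = Finset.range 1 := Finset.eq_of_subset_of_card_le hS (by simp [hc])
        interval_cases t
        · rw [this]; simp
  | succ m ih =>
      intro S hS hadj
      classical
      set S' := S.filter (fun a => a < 2 * m + 1) with hS'
      set T := S.filter (fun a => ¬ a < 2 * m + 1) with hT
      have hpart : S'.card + T.card = S.card := Finset.card_filter_add_card_filter_not _
      have hS'sub : S' ⊆ Finset.range (2 * m + 1) := by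
        intro a ha
        rw [hS', Finset.mem_filter] at ha
        exact Finset.mem_range.mpr ha.2
      have hS'adj : ∀ a ∈ S', a + 1 ∉ S' := by
        intro a ha hc
        rw [hS', Finset.mem_filter] at ha hc
        exact hadj a ha.1 hc.1
      obtain ⟨ihb, ihr⟩ := ih S' hS'sub hS'adj
      have hTsub : ∀ a ∈ T, a = 2 * m + 1 ∨ a = 2 * m + 2 := by
        intro a ha
        rw [hT, Finset.mem_filter] at ha
        have := Finset.mem_range.mp (hS ha.1)
        omega
      have hTcard : T.card ≤ 1 := by
        by_contra hc
        obtain ⟨a, ha, b, hb, hab⟩ := Finset.one_lt_card.mp (show 1 < T.card by omega)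
        rcases hTsub a ha with h1 | h1 <;> rcases hTsub b hb with h2 | h2
        · omega
        · refine hadj a ?_ ?_
          · exact (Finset.mem_filter.mp ha).1
          · rw [h1, show 2 * m + 1 + 1 = 2 * m + 2 by omega, ← h2]
            exact (Finset.mem_filter.mp hb).1
        · refine hadj b ?_ ?_
          · exact (Finset.mem_filter.mp hb).1
          · rw [h2, show 2 * m + 1 + 1 = 2 * m + 2 by omega, ← h1]
            exact (Finset.mem_filter.mp ha).1
        · omega
      constructor
      · omega
      · intro hc t ht
        have hS'card : S'.card = m + 1 := by omega
        have hfull := ihr hS'card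
        by_cases htm : t ≤ m
        · exact (Finset.mem_filter.mp (hfull t htm)).1
        · have htt : t = m + 1 := by omega
          have h2m : 2 * m ∈ S' := hfull m (le_refl m)
          have h2mS : 2 * m ∈ S := (Finset.mem_filter.mp h2m).1
          have hno : 2 * m + 1 ∉ S := hadj _ h2mS
          have hTone : T.card = 1 := by omega
          obtain ⟨a, haT⟩ := Finset.card_eq_one.mp hTone
          have haS : a ∈ S := (Finset.mem_filter.mp (haT ▸ Finset.mem_singleton_self a)).1
          rcases hTsub a (haT ▸ Finset.mem_singleton_self a) with h1 | h1
          · exact absurd (h1 ▸ haS) hno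
          · rw [htt, show 2 * (m + 1) = 2 * m + 2 by omega, ← h1]
            exact haS

lemma exists_full_segment {K l : ℕ} {M : GadgetV K l → Option (GadgetV K l)}
    (hM : GadgetMatching K l M) (hcard : (l + 2) * C K < (EdS K l M).card) :
    ∃ i, i < C K ∧ ∀ t, t ≤ l + 2 → (i * L l + 2 * t) ∈ EdS K l M := by
  classical
  have hL : L l = 2 * l + 5 := rfl
  have hLp := L_pos l
  -- fiberwise count
  have hmap : ∀ s ∈ EdS K l M, s / L l ∈ Finset.range (C K) := by
    intro s hs
    have hs' := (mem_EdS K l M).mp hs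
    refine Finset.mem_range.mpr ?_
    exact (Nat.div_lt_iff_lt_mul hLp).mpr hs'.1
  have hsum := Finset.card_eq_sum_card_fiberwise hmap
  -- each fiber equals the image of a segment filter
  have hfib : ∀ i, i < C K →
      (EdS K l M).filter (fun s => s / L l = i) =
        ((Finset.range (L l)).filter (fun r => (i * L l + r) ∈ EdS K l M)).image
          (fun r => i * L l + r) := by
    intro i hi
    ext s
    simp only [Finset.mem_filter, Finset.mem_image, Finset.mem_range]
    constructor
    · rintro ⟨hs, hdiv⟩
      refine ⟨s % L l, ⟨Nat.mod_lt _ hLp, ?_⟩, ?_⟩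
      · have h5 : i * L l + s % L l = s := by
          have h6 := Nat.div_add_mod s (L l)
          have h7 : s / L l * L l = L l * (s / L l) := Nat.mul_comm _ _
          rw [← hdiv]
          omega
        rwa [h5]
      · have h6 := Nat.div_add_mod s (L l)
        have h7 : s / L l * L l = L l * (s / L l) := Nat.mul_comm _ _
        rw [← hdiv]
        omega
    · rintro ⟨r, ⟨hr, hEd⟩, hrs⟩
      refine ⟨by rwa [hrs] at hEd, ?_⟩
      rw [← hrs, seg_div _ _ _ hr]
  have hfibcard : ∀ i ∈ Finset.range (C K),
      ((EdS K l M).filter (fun s => s / L l = i)).card =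
        ((Finset.range (L l)).filter (fun r => (i * L l + r) ∈ EdS K l M)).card := by
    intro i hi
    rw [hfib i (Finset.mem_range.mp hi)]
    exact Finset.card_image_of_injective _ (fun a b hab => by omega)
  rw [Finset.sum_congr rfl hfibcard] at hsum
  -- pigeonhole
  by_contra hno
  push_neg at hno
  have hbound : ∀ i ∈ Finset.range (C K),
      ((Finset.range (L l)).filter (fun r => (i * L l + r) ∈ EdS K l M)).card ≤ l + 3 ∧
      (((Finset.range (L l)).filter (fun r => (i * L l + r) ∈ EdS K l M)).card = l + 3 →
        ∀ t, t ≤ l + 2 → (i * L l + 2 * t) ∈ EdS K l M) := by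
    intro i hi
    have hadj : ∀ a ∈ (Finset.range (L l)).filter (fun r => (i * L l + r) ∈ EdS K l M),
        a + 1 ∉ (Finset.range (L l)).filter (fun r => (i * L l + r) ∈ EdS K l M) := by
      intro a ha hc
      rw [Finset.mem_filter] at ha hc
      have ha' := (mem_EdS K l M).mp ha.2
      have hc' := (mem_EdS K l M).mp hc.2
      refine no_adj hM (i * L l + a) ha'.2 ?_
      have e1 : i * L l + (a + 1) = i * L l + a + 1 := by omega
      rw [e1] at hc'
      have := hc'.2
      rw [show i * L l + a + 1 + 1 = i * L l + a + 2 by omega] at this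
      exact this
    have := path_lemma (l + 2) ((Finset.range (L l)).filter (fun r => (i * L l + r) ∈ EdS K l M))
      (by rw [show 2 * (l + 2) + 1 = L l by omega]; exact Finset.filter_subset _ _) hadj
    constructor
    · have := this.1; omega
    · intro hcard' t ht
      have h2t : 2 * t ∈ (Finset.range (L l)).filter (fun r => (i * L l + r) ∈ EdS K l M) :=
        this.2 (by omega) t ht
      exact (Finset.mem_filter.mp h2t).2
  have hlt : ∀ i ∈ Finset.range (C K),
      ((Finset.range (L l)).filter (fun r => (i * L l + r) ∈ EdS K l M)).card ≤ l + 2 := by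
    intro i hi
    obtain ⟨hb, hr⟩ := hbound i hi
    by_contra hgt
    push_neg at hgt
    have hceq : ((Finset.range (L l)).filter
        (fun r => (i * L l + r) ∈ EdS K l M)).card = l + 3 := by omega
    obtain ⟨t, ht, hnm⟩ := hno i (Finset.mem_range.mp hi)
    exact hnm (hr hceq t ht)
  have : (EdS K l M).card ≤ (l + 2) * C K := by
    rw [hsum]
    calc ∑ i ∈ Finset.range (C K), ((Finset.range (L l)).filter
          (fun r => (i * L l + r) ∈ EdS K l M)).card
        ≤ ∑ i ∈ Finset.range (C K), (l + 2) := Finset.sum_le_sum hlt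
      _ = (l + 2) * C K := by rw [Finset.sum_const, Finset.card_range]; ring
  omega

/-! ### The modified matching -/

def relp (K l j0 : ℕ) (u : GadgetV K l) : ℕ := (idx K l u + n K l - j0) % n K l

lemma relp_lt (K l j0 : ℕ) (u : GadgetV K l) : relp K l j0 u < n K l :=
  Nat.mod_lt _ (n_pos K l)

lemma vtx_relp (K l j0 : ℕ) (hj0 : j0 < n K l) (u : GadgetV K l) :
    vtx K l (j0 + relp K l j0 u) = u := by
  have h1 : (j0 + (idx K l u + n K l - j0) % n K l) % n K l = idx K l u % n K l := by
    rw [Nat.add_mod_mod, show j0 + (idx K l u + n K l - j0) = idx K l u + n K l by omega,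
      Nat.add_mod_right]
  rw [relp, vtx_congr K l h1, vtx_idx]

lemma relp_vtx (K l j0 s : ℕ) (hj0 : j0 < n K l) (hs : s < n K l) :
    relp K l j0 (vtx K l (j0 + s)) = s := by
  rw [relp, idx_vtx]
  have h2 : (j0 + s) % n K l + n K l - j0 = ((j0 + s) % n K l + (n K l - j0)) := by omega
  rw [h2, Nat.mod_add_mod, show j0 + s + (n K l - j0) = s + n K l by omega,
    Nat.add_mod_right, Nat.mod_eq_of_lt hs]

lemma vtx_pred (K l : ℕ) {a : ℕ} (ha : 1 ≤ a) :
    vtx K l (a + n K l - 1) = vtx K l (a - 1) := by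
  apply vtx_congr
  rw [show a + n K l - 1 = (a - 1) + n K l by omega, Nat.add_mod_right]

lemma partner_options' {K l : ℕ} {M : GadgetV K l → Option (GadgetV K l)}
    (hM : GadgetMatching K l M) (a : ℕ) (ha : 1 ≤ a) :
    M (vtx K l a) = none ∨ M (vtx K l a) = some (vtx K l (a + 1)) ∨
      M (vtx K l a) = some (vtx K l (a - 1)) := by
  rcases partner_options hM a with h | h | h
  · exact Or.inl h
  · exact Or.inr (Or.inl h)
  · exact Or.inr (Or.inr (by rw [← vtx_pred K l ha]; exact h))

lemma rank_bwd' (K l : ℕ) {a : ℕ} (ha : 1 ≤ a) :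
    gadgetRank K l (vtx K l a) (some (vtx K l (a - 1)))
      = if fwdP (a % L l) then 1 else 0 := by
  rw [← vtx_pred K l ha, rank_bwd]

def Nmod (K l : ℕ) (M : GadgetV K l → Option (GadgetV K l)) (j0 T : ℕ) (lastN : Bool) :
    GadgetV K l → Option (GadgetV K l) := fun u =>
  if relp K l j0 u = 0 then none
  else if relp K l j0 u < T then
    (if relp K l j0 u % 2 = 1 then some (vtx K l (j0 + relp K l j0 u + 1))
     else some (vtx K l (j0 + relp K l j0 u - 1)))
  else if relp K l j0 u = T then (if lastN = true then none else some (vtx K l (j0 + T - 1)))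
  else M u

lemma Nmod_at {K l : ℕ} (M : GadgetV K l → Option (GadgetV K l)) (j0 T : ℕ) (lastN : Bool)
    (hj0 : j0 < n K l) {s : ℕ} (hs : s < n K l) :
    Nmod K l M j0 T lastN (vtx K l (j0 + s)) =
      if s = 0 then none
      else if s < T then
        (if s % 2 = 1 then some (vtx K l (j0 + s + 1)) else some (vtx K l (j0 + s - 1)))
      else if s = T then (if lastN = true then none else some (vtx K l (j0 + T - 1)))
      else M (vtx K l (j0 + s)) := by
  unfold Nmod
  rw [relp_vtx K l j0 s hj0 hs]

section Main

variable {K l : ℕ} {M : GadgetV K l → Option (GadgetV K l)}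

/-- context for the arc construction -/
structure ArcCtx (K l : ℕ) (M : GadgetV K l → Option (GadgetV K l))
    (j0 T : ℕ) (lastN : Bool) : Prop where
  hM : GadgetMatching K l M
  hj0L : j0 % L l = 0
  hj0 : j0 < n K l
  hT2 : 2 ≤ T
  hTn : T < n K l
  hparf : lastN = false → T % 2 = 0
  hpart : lastN = true → T % 2 = 1 ∧ T = L l
  hMe : ∀ s, s < T → s % 2 = 0 → M (vtx K l (j0 + s)) = some (vtx K l (j0 + s + 1))
  hlast : lastN = false → M (vtx K l (j0 + T)) = none

namespace ArcCtx

variable {j0 T : ℕ} {lastN : Bool} (ctx : ArcCtx K l M j0 T lastN)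

include ctx

/-- every vertex strictly inside the arc is matched in M with the even/odd pattern;
    position `T` is matched backwards iff `lastN`. -/
lemma hMo : ∀ s, 1 ≤ s → s ≤ T → s % 2 = 1 →
    M (vtx K l (j0 + s)) = some (vtx K l (j0 + s - 1)) := by
  intro s h1 h2 h3
  have he := ctx.hMe (s - 1) (by omega) (by omega)
  have := ctx.hM.1 _ _ (by rw [show j0 + (s-1) + 1 = j0 + s by omega] at he; exact he)
  rw [this, show j0 + (s - 1) = j0 + s - 1 by omega]

lemma hMT_perfect (hl : lastN = true) :
    M (vtx K l (j0 + T)) = some (vtx K l (j0 + T - 1)) := by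
  have hodd := (ctx.hpart hl).1
  exact ctx.hMo T (by have := ctx.hT2; omega) (le_refl _) hodd

lemma matching : GadgetMatching K l (Nmod K l M j0 T lastN) := by
  have hn := n_ge K l
  have hj0 := ctx.hj0
  have hTn := ctx.hTn
  have hT2 := ctx.hT2
  constructor
  · -- symmetry
    intro u v huv
    have hslt : relp K l j0 u < n K l := relp_lt K l j0 u
    set s := relp K l j0 u with hsdef
    have hu : vtx K l (j0 + s) = u := vtx_relp K l j0 hj0 u
    rw [← hu] at huv
    rw [Nmod_at M j0 T lastN hj0 hslt] at huv
    by_cases h0 : s = 0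
    · rw [if_pos h0] at huv; exact absurd huv (by simp)
    rw [if_neg h0] at huv
    by_cases hlt : s < T
    · rw [if_pos hlt] at huv
      by_cases hodd : s % 2 = 1
      · rw [if_pos hodd] at huv
        obtain rfl : v = vtx K l (j0 + (s + 1)) := by
          have h2 := Option.some_injective _ huv
          rw [← h2, show j0 + s + 1 = j0 + (s + 1) by omega]
        rw [Nmod_at M j0 T lastN hj0 (show s + 1 < n K l by omega)]
        by_cases hlt2 : s + 1 < T
        · rw [if_neg (by omega), if_pos hlt2, if_neg (by omega),
            show j0 + (s + 1) - 1 = j0 + s by omega, hu]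
        · have hTeq : s + 1 = T := by omega
          have hlf : lastN = false := by
            rcases Bool.eq_false_or_eq_true lastN with hb | hb
            · exfalso; have := (ctx.hpart hb).1; omega
            · exact hb
          rw [if_neg (by omega), if_neg (by omega), if_pos hTeq, hlf]
          simp only [Bool.false_eq_true, if_false]
          rw [show j0 + T - 1 = j0 + s by omega, hu]
      · rw [if_neg hodd] at huv
        have hs2 : 2 ≤ s := by omega
        obtain rfl : v = vtx K l (j0 + (s - 1)) := by
          have h2 := Option.some_injective _ huv
          rw [← h2, show j0 + s - 1 = j0 + (s - 1) by omega]
        rw [Nmod_at M j0 T lastN hj0 (show s - 1 < n K l by omega)]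
        rw [if_neg (by omega), if_pos (by omega), if_pos (by omega),
          show j0 + (s - 1) + 1 = j0 + s by omega, hu]
    · rw [if_neg hlt] at huv
      by_cases hTeq : s = T
      · rw [if_pos hTeq] at huv
        rcases Bool.eq_false_or_eq_true lastN with hb | hb
        · rw [hb] at huv; simp at huv
        · rw [hb] at huv
          simp only [Bool.false_eq_true, if_false] at huv
          obtain rfl : v = vtx K l (j0 + (T - 1)) := by
            have h2 := Option.some_injective _ huv
            rw [← h2, show j0 + T - 1 = j0 + (T - 1) by omega]
          rw [Nmod_at M j0 T lastN hj0 (show T - 1 < n K l by omega)]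
          have hpar := ctx.hparf hb
          rw [if_neg (by omega), if_pos (by omega), if_pos (by omega),
            show j0 + (T - 1) + 1 = j0 + T by omega, ← hTeq, hu]
      · -- s > T : outside the arc
        rw [if_neg hTeq] at huv
        have hsT : T < s := by omega
        rcases partner_options' ctx.hM (j0 + s) (by omega) with hopt | hopt | hopt
        · rw [huv] at hopt; exact absurd hopt (by simp)
        · -- v = vtx (j0 + s + 1)
          rw [huv] at hopt
          have hv : v = vtx K l (j0 + s + 1) := Option.some_injective _ hopt
          by_cases hsn : s + 1 < n K l
          · subst hv
            rw [show j0 + s + 1 = j0 + (s + 1) by omega]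
            rw [Nmod_at M j0 T lastN hj0 hsn]
            rw [if_neg (by omega), if_neg (by omega), if_neg (by omega)]
            rw [show j0 + (s + 1) = j0 + s + 1 by omega, ctx.hM.1 _ _ huv, hu]
          · exfalso
            have hseq : s + 1 = n K l := by omega
            have hv0 : v = vtx K l j0 := by
              rw [hv, show j0 + s + 1 = j0 + n K l by omega, vtx_add_n]
            have hsymm := ctx.hM.1 _ _ huv
            have hM0 := ctx.hMe 0 (by omega) (by omega)
            simp only [Nat.add_zero] at hM0
            rw [← hv0] at hM0
            have heq := vtx_inj K l (Option.some_injective _ (hsymm.symm.trans hM0))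
            exact absurd (Nat.le_of_dvd (by omega)
              ((Nat.modEq_iff_dvd' (by omega)).mp heq.symm)) (by omega)
        · -- v = vtx (j0 + s - 1)
          rw [huv] at hopt
          have hv : v = vtx K l (j0 + s - 1) := Option.some_injective _ hopt
          by_cases hs1T : s - 1 = T
          · exfalso
            rcases Bool.eq_false_or_eq_true lastN with hb2 | hb
            · have h1 := ctx.hMT_perfect hb2
              have hsymm := ctx.hM.1 _ _ huv
              rw [hv, show j0 + s - 1 = j0 + T by omega] at hsymm
              rw [hsymm] at h1
              have heq := vtx_inj K l (Option.some_injective _ h1)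
              have hd : n K l ∣ (j0 + s) - (j0 + T - 1) :=
                (Nat.modEq_iff_dvd' (by omega)).mp heq.symm
              exact absurd (Nat.le_of_dvd (by omega) hd) (by omega)
            · have h1 := ctx.hlast hb
              have hsymm := ctx.hM.1 _ _ huv
              rw [hv, show j0 + s - 1 = j0 + T by omega] at hsymm
              rw [hsymm] at h1
              simp at h1
          · subst hv
            rw [show j0 + s - 1 = j0 + (s - 1) by omega]
            rw [Nmod_at M j0 T lastN hj0 (show s - 1 < n K l by omega)]
            rw [if_neg (by omega), if_neg (by omega), if_neg (by omega)]
            rw [show j0 + (s - 1) = j0 + s - 1 by omega, ctx.hM.1 _ _ huv, hu]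
  · -- edge validity
    intro u v huv
    have hslt : relp K l j0 u < n K l := relp_lt K l j0 u
    set s := relp K l j0 u with hsdef
    have hu : vtx K l (j0 + s) = u := vtx_relp K l j0 hj0 u
    rw [← hu] at huv ⊢
    rw [Nmod_at M j0 T lastN hj0 hslt] at huv
    have hfwd : v = vtx K l (j0 + s + 1) →
        v = gadgetBest K l (vtx K l (j0 + s)) ∨ v = gadgetSecond K l (vtx K l (j0 + s)) := by
      intro hv
      by_cases hf : fwdP ((j0 + s) % L l)
      · exact Or.inl (by rw [hv, best_vtx K l _ hf])
      · exact Or.inr (by rw [hv, second_vtx K l _ hf])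
    have hbwd : 1 ≤ s → v = vtx K l (j0 + s - 1) →
        v = gadgetBest K l (vtx K l (j0 + s)) ∨ v = gadgetSecond K l (vtx K l (j0 + s)) := by
      intro hw hv
      have e1 : vtx K l (j0 + s - 1) = vtx K l (j0 + s + n K l - 1) :=
        (vtx_pred K l (by omega)).symm
      by_cases hf : fwdP ((j0 + s) % L l)
      · exact Or.inr (by rw [hv, e1, second_eq K l _ hf])
      · exact Or.inl (by rw [hv, e1, best_eq' K l _ hf])
    by_cases h0 : s = 0
    · rw [if_pos h0] at huv; exact absurd huv (by simp)
    rw [if_neg h0] at huv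
    by_cases hlt : s < T
    · rw [if_pos hlt] at huv
      by_cases hodd : s % 2 = 1
      · rw [if_pos hodd] at huv
        exact hfwd (Option.some_injective _ huv).symm
      · rw [if_neg hodd] at huv
        exact hbwd (by omega) (Option.some_injective _ huv).symm
    · rw [if_neg hlt] at huv
      by_cases hTeq : s = T
      · rw [if_pos hTeq] at huv
        rcases Bool.eq_false_or_eq_true lastN with hb | hb
        · rw [hb] at huv; simp at huv
        · rw [hb] at huv
          simp only [Bool.false_eq_true, if_false] at huv
          refine hbwd (by omega) ?_
          rw [(Option.some_injective _ huv).symm, hTeq]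
      · rw [if_neg hTeq] at huv
        have := ctx.hM.2 _ _ huv
        exact this

lemma hinj : ∀ a b : ℕ, a < n K l → b < n K l →
    vtx K l (j0 + a) = vtx K l (j0 + b) → a = b := by
  intro a b ha hb h
  have h1 := relp_vtx K l j0 a ctx.hj0 ha
  have h2 := relp_vtx K l j0 b ctx.hj0 hb
  rw [← h1, ← h2, h]

lemma msize_false (hb : lastN = false) :
    gadgetMSize K l (Nmod K l M j0 T lastN) = gadgetMSize K l M := by
  classical
  have hn := n_ge K l
  have hj0 := ctx.hj0
  have hTn := ctx.hTn
  have hT2 := ctx.hT2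
  have hkey : ∀ v, (Nmod K l M j0 T lastN v).isSome ↔
      (v = vtx K l (j0 + T) ∨ (v ≠ vtx K l (j0 + 0) ∧ (M v).isSome)) := by
    intro v
    obtain ⟨s, hslt, rfl⟩ : ∃ s, s < n K l ∧ vtx K l (j0 + s) = v :=
      ⟨relp K l j0 v, relp_lt K l j0 v, vtx_relp K l j0 hj0 v⟩
    rw [Nmod_at M j0 T lastN hj0 hslt]
    by_cases h0 : s = 0
    · subst h0
      rw [if_pos rfl]
      refine iff_of_false (by simp) ?_
      rintro (hc | ⟨hne, _⟩)
      · exact absurd (ctx.hinj 0 T (by omega) (by omega) hc) (by omega)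
      · exact hne rfl
    rw [if_neg h0]
    by_cases hlt : s < T
    · rw [if_pos hlt]
      refine iff_of_true ?_ (Or.inr ⟨?_, ?_⟩)
      · by_cases hodd : s % 2 = 1
        · rw [if_pos hodd]; simp
        · rw [if_neg hodd]; simp
      · intro hc
        exact absurd (ctx.hinj s 0 (by omega) (by omega) hc) (by omega)
      · by_cases hodd : s % 2 = 1
        · simp [ctx.hMo s (by omega) (by omega) hodd]
        · simp [ctx.hMe s (by omega) (by omega)]
    · by_cases hTeq : s = T
      · subst hTeq
        rw [if_neg (by omega), if_pos rfl, hb]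
        simp only [Bool.false_eq_true, if_false]
        refine iff_of_true (by simp) ?_
        left
        trivial
      · rw [if_neg hlt, if_neg hTeq]
        constructor
        · intro h
          refine Or.inr ⟨?_, h⟩
          intro hc
          exact absurd (ctx.hinj s 0 (by omega) (by omega) hc) (by omega)
        · rintro (hc | ⟨_, h⟩)
          · exact absurd (ctx.hinj s T (by omega) (by omega) hc) (by omega)
          · exact h
  have hmem : vtx K l (j0 + 0) ∈ Finset.univ.filter (fun v => (M v).isSome) := by
    refine Finset.mem_filter.mpr ⟨Finset.mem_univ _, ?_⟩
    have h := ctx.hMe 0 (by omega) (by omega)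
    simp only [Nat.add_zero] at h
    simp [h]
  have hset : Finset.univ.filter (fun v => (Nmod K l M j0 T lastN v).isSome) =
      insert (vtx K l (j0 + T))
        ((Finset.univ.filter (fun v => (M v).isSome)).erase (vtx K l (j0 + 0))) := by
    ext v
    simp only [Finset.mem_filter, Finset.mem_univ, true_and, Finset.mem_insert,
      Finset.mem_erase]
    rw [hkey v]
  have hTm : vtx K l (j0 + T) ∉
      (Finset.univ.filter (fun v => (M v).isSome)).erase (vtx K l (j0 + 0)) := by
    intro hc
    have h2 := (Finset.mem_filter.mp (Finset.mem_of_mem_erase hc)).2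
    rw [ctx.hlast hb] at h2
    simp at h2
  have hpos : 0 < (Finset.univ.filter (fun v : GadgetV K l => (M v).isSome)).card :=
    Finset.card_pos.mpr ⟨_, hmem⟩
  rw [gadgetMSize, gadgetMSize, hset, Finset.card_insert_of_notMem hTm,
    Finset.card_erase_of_mem hmem]
  omega

lemma card_gadget' : Fintype.card (GadgetV K l) = n K l := by
  have h1 : L l = 2 * l + 5 := rfl
  have h2 : C K = 2 * K + 2 := rfl
  simp only [GadgetV, Fintype.card_sum, Fintype.card_prod, Fintype.card_fin]
  rw [n_eq, h1, h2]
  ring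

lemma msize_true (hb : lastN = true) (hall : ∀ v, (M v).isSome) :
    gadgetMSize K l (Nmod K l M j0 T lastN) + 2 = n K l := by
  classical
  have hn := n_ge K l
  have hj0 := ctx.hj0
  have hTn := ctx.hTn
  have hT2 := ctx.hT2
  have hkey : ∀ v, (Nmod K l M j0 T lastN v).isSome ↔
      (v ≠ vtx K l (j0 + 0) ∧ v ≠ vtx K l (j0 + T)) := by
    intro v
    obtain ⟨s, hslt, rfl⟩ : ∃ s, s < n K l ∧ vtx K l (j0 + s) = v :=
      ⟨relp K l j0 v, relp_lt K l j0 v, vtx_relp K l j0 hj0 v⟩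
    rw [Nmod_at M j0 T lastN hj0 hslt]
    by_cases h0 : s = 0
    · subst h0
      rw [if_pos rfl]
      exact iff_of_false (by simp) (fun ⟨h1, _⟩ => h1 rfl)
    rw [if_neg h0]
    by_cases hlt : s < T
    · rw [if_pos hlt]
      refine iff_of_true ?_ ⟨?_, ?_⟩
      · by_cases hodd : s % 2 = 1
        · rw [if_pos hodd]; simp
        · rw [if_neg hodd]; simp
      · intro hc
        exact absurd (ctx.hinj s 0 (by omega) (by omega) hc) (by omega)
      · intro hc
        exact absurd (ctx.hinj s T (by omega) (by omega) hc) (by omega)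
    · by_cases hTeq : s = T
      · subst hTeq
        rw [if_neg (by omega), if_pos rfl, hb]
        simp only [if_true]
        exact iff_of_false (by simp) (fun ⟨_, h2⟩ => h2 rfl)
      · rw [if_neg hlt, if_neg hTeq]
        refine iff_of_true (hall _) ⟨?_, ?_⟩
        · intro hc
          exact absurd (ctx.hinj s 0 (by omega) (by omega) hc) (by omega)
        · intro hc
          exact absurd (ctx.hinj s T (by omega) (by omega) hc) (by omega)
  have hset : Finset.univ.filter (fun v => (Nmod K l M j0 T lastN v).isSome) =
      ((Finset.univ : Finset (GadgetV K l)).erase (vtx K l (j0 + 0))).erase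
        (vtx K l (j0 + T)) := by
    ext v
    simp only [Finset.mem_filter, Finset.mem_univ, true_and, Finset.mem_erase]
    rw [hkey v]
    tauto
  have hmem1 : vtx K l (j0 + T) ∈
      (Finset.univ : Finset (GadgetV K l)).erase (vtx K l (j0 + 0)) := by
    refine Finset.mem_erase.mpr ⟨?_, Finset.mem_univ _⟩
    intro hc
    exact absurd (ctx.hinj T 0 (by omega) (by omega) hc) (by omega)
  have hmem0 : vtx K l (j0 + 0) ∈ (Finset.univ : Finset (GadgetV K l)) := Finset.mem_univ _
  rw [gadgetMSize, hset, Finset.card_erase_of_mem hmem1, Finset.card_erase_of_mem hmem0,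
    Finset.card_univ, ctx.card_gadget']
  omega

lemma delta_le : gadgetDelta K l M (Nmod K l M j0 T lastN) ≤ -1 := by
  classical
  have hn := n_ge K l
  have hj0 := ctx.hj0
  have hTn := ctx.hTn
  have hT2 := ctx.hT2
  have hL : L l = 2 * l + 5 := rfl
  have hmodL : ∀ w : ℕ, (j0 + w) % L l = w % L l := by
    intro w
    rw [Nat.add_mod, ctx.hj0L, Nat.zero_add, Nat.mod_mod_of_dvd _ (dvd_refl _)]
  set N := Nmod K l M j0 T lastN with hN
  unfold gadgetDelta
  rw [sum_vtx K l j0 hj0]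
  -- split the sum
  rw [Finset.range_eq_Ico, ← Finset.sum_Ico_consecutive _ (Nat.zero_le (T + 1))
    (show T + 1 ≤ n K l by omega)]
  have houter : ∑ s ∈ Finset.Ico (T + 1) (n K l),
      (if gadgetRank K l (vtx K l (j0 + s)) (M (vtx K l (j0 + s))) <
          gadgetRank K l (vtx K l (j0 + s)) (N (vtx K l (j0 + s))) then (1 : ℤ)
        else if gadgetRank K l (vtx K l (j0 + s)) (N (vtx K l (j0 + s))) <
          gadgetRank K l (vtx K l (j0 + s)) (M (vtx K l (j0 + s))) then -1 else 0) = 0 := by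
    refine Finset.sum_eq_zero ?_
    intro s hs
    have hs' := Finset.mem_Ico.mp hs
    rw [hN, Nmod_at M j0 T lastN hj0 (show s < n K l by omega),
      if_neg (show ¬ s = 0 by omega), if_neg (show ¬ s < T by omega),
      if_neg (show ¬ s = T by omega)]
    simp
  rw [houter, add_zero, ← Finset.range_eq_Ico]
  -- inner sum
  rw [Finset.sum_range_succ]
  have hsplit : ∑ s ∈ Finset.range T,
      (if gadgetRank K l (vtx K l (j0 + s)) (M (vtx K l (j0 + s))) <
          gadgetRank K l (vtx K l (j0 + s)) (N (vtx K l (j0 + s))) then (1 : ℤ)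
        else if gadgetRank K l (vtx K l (j0 + s)) (N (vtx K l (j0 + s))) <
          gadgetRank K l (vtx K l (j0 + s)) (M (vtx K l (j0 + s))) then -1 else 0) =
      (∑ s ∈ Finset.range (T - 1),
        (if gadgetRank K l (vtx K l (j0 + (s+1))) (M (vtx K l (j0 + (s+1)))) <
            gadgetRank K l (vtx K l (j0 + (s+1))) (N (vtx K l (j0 + (s+1)))) then (1 : ℤ)
          else if gadgetRank K l (vtx K l (j0 + (s+1))) (N (vtx K l (j0 + (s+1)))) <
            gadgetRank K l (vtx K l (j0 + (s+1))) (M (vtx K l (j0 + (s+1)))) then -1 else 0)) +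
      (if gadgetRank K l (vtx K l (j0 + 0)) (M (vtx K l (j0 + 0))) <
          gadgetRank K l (vtx K l (j0 + 0)) (N (vtx K l (j0 + 0))) then (1 : ℤ)
        else if gadgetRank K l (vtx K l (j0 + 0)) (N (vtx K l (j0 + 0))) <
          gadgetRank K l (vtx K l (j0 + 0)) (M (vtx K l (j0 + 0))) then -1 else 0) := by
    rw [show T = (T - 1) + 1 by omega]
    rw [Finset.sum_range_succ']
    congr 1
  rw [hsplit]
  -- term at 0
  have hzero : (if gadgetRank K l (vtx K l (j0 + 0)) (M (vtx K l (j0 + 0))) <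
      gadgetRank K l (vtx K l (j0 + 0)) (N (vtx K l (j0 + 0))) then (1 : ℤ)
      else if gadgetRank K l (vtx K l (j0 + 0)) (N (vtx K l (j0 + 0))) <
        gadgetRank K l (vtx K l (j0 + 0)) (M (vtx K l (j0 + 0))) then -1 else 0) = 1 := by
    rw [ctx.hMe 0 (by omega) (by omega), rank_fwd, hmodL 0,
      if_pos (show fwdP (0 % L l) from Or.inr (Nat.zero_mod _))]
    rw [hN, Nmod_at M j0 T lastN hj0 (show (0:ℕ) < n K l by omega),
      if_pos (show (0:ℕ) = 0 from rfl)]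
    simp [gadgetRank]
  -- term at T
  have hTterm : (if gadgetRank K l (vtx K l (j0 + T)) (M (vtx K l (j0 + T))) <
      gadgetRank K l (vtx K l (j0 + T)) (N (vtx K l (j0 + T))) then (1 : ℤ)
      else if gadgetRank K l (vtx K l (j0 + T)) (N (vtx K l (j0 + T))) <
        gadgetRank K l (vtx K l (j0 + T)) (M (vtx K l (j0 + T))) then -1 else 0) =
      (if lastN = true then 1 else -1) := by
    rcases Bool.eq_false_or_eq_true lastN with hb | hb
    · rw [hb]
      simp only [if_true]
      have h1 := ctx.hMT_perfect hb
      have hTL := (ctx.hpart hb).2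
      rw [h1, rank_bwd' K l (show 1 ≤ j0 + T by omega), hmodL T,
        if_pos (show fwdP (T % L l) by rw [hTL, Nat.mod_self]; exact Or.inr rfl)]
      rw [hN, Nmod_at M j0 T lastN hj0 (show T < n K l by omega),
        if_neg (show ¬ T = 0 by omega), if_neg (show ¬ T < T by omega),
        if_pos (show T = T from rfl), hb]
      simp [gadgetRank]
    · rw [hb]
      simp only [Bool.false_eq_true, if_false]
      rw [ctx.hlast hb]
      rw [hN, Nmod_at M j0 T lastN hj0 (show T < n K l by omega),
        if_neg (show ¬ T = 0 by omega), if_neg (show ¬ T < T by omega),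
        if_pos (show T = T from rfl), hb]
      simp only [Bool.false_eq_true, if_false]
      rw [rank_bwd' K l (show 1 ≤ j0 + T by omega), hmodL T]
      by_cases hf : fwdP (T % L l)
      · rw [if_pos hf]; simp [gadgetRank]
      · rw [if_neg hf]; simp [gadgetRank]
  -- the middle sum equals gsum
  have hmid : ∑ s ∈ Finset.range (T - 1),
      (if gadgetRank K l (vtx K l (j0 + (s+1))) (M (vtx K l (j0 + (s+1)))) <
          gadgetRank K l (vtx K l (j0 + (s+1))) (N (vtx K l (j0 + (s+1)))) then (1 : ℤ)
        else if gadgetRank K l (vtx K l (j0 + (s+1))) (N (vtx K l (j0 + (s+1)))) <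
          gadgetRank K l (vtx K l (j0 + (s+1))) (M (vtx K l (j0 + (s+1)))) then -1 else 0) =
      gsum l (T - 1) := by
    rw [gsum]
    refine Finset.sum_congr rfl ?_
    intro s hs
    have hs' := Finset.mem_range.mp hs
    set w := s + 1 with hw
    have hw1 : 1 ≤ w := by omega
    have hwT : w ≤ T - 1 := by omega
    have hwn : w < n K l := by omega
    have hrkN : gadgetRank K l (vtx K l (j0 + w)) (N (vtx K l (j0 + w))) =
        (if w % 2 = 1 then (if fwdP (w % L l) then 0 else 1)
         else (if fwdP (w % L l) then 1 else 0)) := by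
      rw [hN, Nmod_at M j0 T lastN hj0 hwn, if_neg (show ¬ w = 0 by omega),
        if_pos (show w < T by omega)]
      by_cases hodd : w % 2 = 1
      · rw [if_pos hodd, if_pos hodd, rank_fwd, hmodL]
      · rw [if_neg hodd, if_neg hodd, rank_bwd' K l (show 1 ≤ j0 + w by omega), hmodL]
    have hrkM : gadgetRank K l (vtx K l (j0 + w)) (M (vtx K l (j0 + w))) =
        (if w % 2 = 1 then (if fwdP (w % L l) then 1 else 0)
         else (if fwdP (w % L l) then 0 else 1)) := by
      by_cases hodd : w % 2 = 1
      · rw [if_pos hodd, ctx.hMo w hw1 (by omega) hodd,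
          rank_bwd' K l (show 1 ≤ j0 + w by omega), hmodL]
      · rw [if_neg hodd, ctx.hMe w (by omega) (by omega), rank_fwd, hmodL]
    rw [hrkM, hrkN, chi]
    by_cases hodd : w % 2 = 1 <;> by_cases hf : fwdP (w % L l)
    · rw [if_pos hodd, if_pos hodd, if_pos hf, if_pos hf,
        if_neg (show ¬(fwdP (w % L l) ↔ w % 2 = 0) from fun h => by
          have := h.mp hf; omega)]
      norm_num
    · rw [if_pos hodd, if_pos hodd, if_neg hf, if_neg hf,
        if_pos (show (fwdP (w % L l) ↔ w % 2 = 0) from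
          ⟨fun h => absurd h hf, fun h => absurd h (by omega)⟩)]
      norm_num
    · rw [if_neg hodd, if_neg hodd, if_pos hf, if_pos hf,
        if_pos (show (fwdP (w % L l) ↔ w % 2 = 0) from
          ⟨fun _ => by omega, fun _ => hf⟩)]
      norm_num
    · rw [if_neg hodd, if_neg hodd, if_neg hf, if_neg hf,
        if_neg (show ¬(fwdP (w % L l) ↔ w % 2 = 0) from fun h => absurd (h.mpr (by omega)) hf)]
      norm_num
  rw [hzero, hTterm, hmid]
  rcases Bool.eq_false_or_eq_true lastN with hb | hb
  · rw [hb]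
    simp only [if_true]
    have hTL := (ctx.hpart hb).2
    rw [hTL, gsum_L_sub_one]
    omega
  · rw [hb]
    simp only [Bool.false_eq_true, if_false]
    have hpar := ctx.hparf hb
    have := gsum_le_neg_one l (T - 1) (by omega)
    omega

end ArcCtx

end Main

end NoPop


open NoPop

/-- Lemma 5.4: for `ℓ = l + 2 ≥ 2` and `2ℓK < k < (2ℓ+1)K` (with `2K = 2K'+2` corners),
there is no `k`-popular matching in the cycle gadget. -/
theorem stmt_15 (K l k : ℕ)
    (hk1 : 2 * (l + 2) * (K + 1) < k)
    (hk2 : k < (2 * (l + 2) + 1) * (K + 1)) :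
    ¬ ∃ M : GadgetV K l → Option (GadgetV K l),
        GadgetMatching K l M ∧ 2 * k ≤ gadgetMSize K l M ∧
          ∀ N : GadgetV K l → Option (GadgetV K l),
            GadgetMatching K l N → 2 * k ≤ gadgetMSize K l N →
              0 ≤ gadgetDelta K l M N := by
  rintro ⟨M, hM, hsz, hpop⟩
  classical
  have hL : L l = 2 * l + 5 := rfl
  have hC : C K = 2 * K + 2 := rfl
  have hn := n_ge K l
  have hnb := n_big K l
  have hnn : n K l = (2 * K + 2) * (2 * l + 5) := rfl
  have hEc : k ≤ (EdS K l M).card := by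
    have := msize_eq hM
    omega
  have hCk : (l + 2) * C K < k := by
    have h1 : (l + 2) * C K = 2 * (l + 2) * (K + 1) := by rw [hC]; ring
    omega
  obtain ⟨i, hiC, hfull⟩ := exists_full_segment hM (by omega)
  set j0 := i * L l with hj0def
  have hj0L : j0 % L l = 0 := Nat.mul_mod_left _ _
  have hj0n : j0 + L l ≤ n K l := by
    have h1 : (i + 1) * L l ≤ C K * L l := Nat.mul_le_mul_right _ (by omega)
    calc j0 + L l = (i + 1) * L l := by rw [hj0def]; ring
      _ ≤ C K * L l := h1
      _ = n K l := rfl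
  have hMe_seg : ∀ s, s < L l → s % 2 = 0 →
      M (vtx K l (j0 + s)) = some (vtx K l (j0 + s + 1)) := by
    intro s hs hev
    obtain ⟨t, rfl⟩ : ∃ t, s = 2 * t := ⟨s / 2, by omega⟩
    have ht : t ≤ l + 2 := by omega
    exact ((mem_EdS K l M).mp (hfull t ht)).2
  have hj0lt : j0 < n K l := by omega
  by_cases hex : ∃ v, M v = none
  · -- there is an unmatched vertex
    obtain ⟨v0, hv0⟩ := hex
    set e := relp K l j0 v0 with hedef
    have helt : e < n K l := relp_lt K l j0 v0
    have hev0 : vtx K l (j0 + e) = v0 := vtx_relp K l j0 hj0lt v0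
    have hmatched : ∀ s, s ≤ L l → (M (vtx K l (j0 + s))).isSome := by
      intro s hs
      by_cases hevs : s % 2 = 0
      · have hlt : s < L l := by omega
        simp [hMe_seg s hlt hevs]
      · have h1 := hM.1 _ _ (hMe_seg (s - 1) (by omega) (by omega))
        rw [show j0 + (s - 1) + 1 = j0 + s by omega] at h1
        simp [h1]
    have heL : L l + 1 ≤ e := by
      by_contra hc
      push_neg at hc
      have h1 := hmatched e (by omega)
      rw [hev0, hv0] at h1
      simp at h1
    have hQex : ∃ t, 1 ≤ t ∧ M (vtx K l (j0 + L l + t)) = none := by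
      refine ⟨e - L l, by omega, ?_⟩
      rw [show j0 + L l + (e - L l) = j0 + e by omega, hev0]
      exact hv0
    set d := Nat.find hQex with hddef
    obtain ⟨hd1, hdnone⟩ := Nat.find_spec hQex
    have hdmin : ∀ t, t < d → ¬(1 ≤ t ∧ M (vtx K l (j0 + L l + t)) = none) :=
      fun t ht => Nat.find_min hQex ht
    have hdle : d ≤ e - L l := Nat.find_le ⟨by omega, by
      rw [show j0 + L l + (e - L l) = j0 + e by omega, hev0]; exact hv0⟩
    have hclaim : ∀ t, t < d →
        (t % 2 = 1 → M (vtx K l (j0 + L l + t)) = some (vtx K l (j0 + L l + t + 1))) ∧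
        (t % 2 = 0 → M (vtx K l (j0 + L l + t)) = some (vtx K l (j0 + L l + t - 1))) := by
      intro t
      induction t using Nat.strong_induction_on with
      | _ t ih =>
      intro htd
      constructor
      · intro hodd
        have hne : M (vtx K l (j0 + L l + t)) ≠ none :=
          fun hc => hdmin t htd ⟨by omega, hc⟩
        rcases partner_options' hM (j0 + L l + t) (by omega) with h | h | h
        · exact absurd h hne
        · exact h
        · exfalso
          have h2 := hM.1 _ _ h
          have h3 := (ih (t - 1) (by omega) (by omega)).2 (by omega)
          rw [show j0 + L l + (t - 1) = j0 + L l + t - 1 by omega] at h3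
          have h4 := vtx_inj K l (Option.some_injective _ (h2.symm.trans h3))
          exact mod_ne K l (show j0 + L l + t - 1 - 1 ≤ j0 + L l + t by omega)
            (by omega) (by omega) h4.symm
      · intro hev
        by_cases ht0 : t = 0
        · subst ht0
          have h1 := hM.1 _ _ (hMe_seg (L l - 1) (by omega) (by omega))
          rw [show j0 + (L l - 1) + 1 = j0 + L l + 0 by omega] at h1
          rw [h1, show j0 + (L l - 1) = j0 + L l + 0 - 1 by omega]
        · have h1 := (ih (t - 1) (by omega) (by omega)).1 (by omega)
          have h2 := hM.1 _ _ h1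
          rw [show j0 + L l + (t - 1) + 1 = j0 + L l + t by omega] at h2
          rw [h2, show j0 + L l + (t - 1) = j0 + L l + t - 1 by omega]
    have hdodd : d % 2 = 1 := by
      by_contra hc
      have h1 := (hclaim (d - 1) (by omega)).1 (by omega)
      have h2 := hM.1 _ _ h1
      rw [show j0 + L l + (d - 1) + 1 = j0 + L l + d by omega] at h2
      rw [hdnone] at h2
      simp at h2
    have ctx : ArcCtx K l M j0 (L l + d) false := by
      refine ⟨hM, hj0L, by omega, by omega, by omega, fun _ => by omega,
        fun h => by simp at h, ?_, fun _ => ?_⟩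
      · intro s hsT hsev
        by_cases hsL : s < L l
        · exact hMe_seg s hsL hsev
        · have h1 := (hclaim (s - L l) (by omega)).1 (by omega)
          rw [show j0 + L l + (s - L l) = j0 + s by omega] at h1
          exact h1
      · rw [show j0 + (L l + d) = j0 + L l + d by ring]
        exact hdnone
    have hNs := ctx.msize_false rfl
    have hNd := ctx.delta_le
    have h0 := hpop _ ctx.matching (by rw [hNs]; exact hsz)
    omega
  · -- M is a perfect matching
    push_neg at hex
    have hall : ∀ v, (M v).isSome := fun v => Option.ne_none_iff_isSome.mp (hex v)
    have ctx : ArcCtx K l M j0 (L l) true := by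
      refine ⟨hM, hj0L, by omega, by omega, by omega, fun h => by simp at h,
        fun _ => ⟨by omega, rfl⟩, fun s hs hev => hMe_seg s hs hev, fun h => by simp at h⟩
    have hNs := ctx.msize_true rfl hall
    have hNd := ctx.delta_le
    have he1 : (2 * (l + 2) + 1) * (K + 1) = (K + 1) * (2 * l + 5) := by ring
    have he2 : n K l = 2 * ((K + 1) * (2 * l + 5)) := by rw [hnn]; ring
    have h0 := hpop _ ctx.matching (by omega)
    omega
end

section
/- Let M₁ = (S, 𝓘₁) be a 1-partition matroid given by a partition {S₁, ..., S_n} of S, and M₂ = (S, 𝓘₂) any matroid. Suppose D = {d_i : i ∈ A} is a set of dummy elements disjoint from S indexed by a subset A ⊆ [n], S' = S ∪ D, M'₁ is the 1-partition matroid on S' given by parts S'_i = S_i + d_i for i ∈ A and S'_i = S_i for i ∉ A, and M'₂ is the direct sum of M₂ and the free matroid on D, truncated to rank n. If every part index i ∉ A satisfies |I ∩ S_i| = 1 for all common bases, then the map I ↦ I ∪ { d_i : i ∈ A, I ∩ S_i = ∅ } is a bijection between { I ∈ 𝓘₁ ∩ 𝓘₂ : |I ∩ S_i| = 1 for i ∉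 A } and the set of common bases of M'₁ and M'₂ of size n, with inverse B ↦ B ∩ S. -/
lemma card_eq_sum_parts16 {β γ : Type*} [DecidableEq β] [Fintype γ] (Q : γ → Finset β)
    (hd : ∀ i j, i ≠ j → Disjoint (Q i) (Q j)) (B : Finset β)
    (hcov : ∀ x ∈ B, ∃ i, x ∈ Q i) : B.card = ∑ i, (B ∩ Q i).card := by
  rw [← Finset.card_biUnion]
  · congr 1
    ext x
    simp only [Finset.mem_biUnion, Finset.mem_univ, true_and, Finset.mem_inter]
    exact ⟨fun hx => (hcov x hx).imp fun i hi => ⟨hx, hi⟩, fun ⟨i, hi, _⟩ => hi⟩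
  · intro i _ j _ hij
    exact (hd i j hij).mono Finset.inter_subset_right Finset.inter_subset_right



/-- The dummy-element correspondence.  Let `M₁` be the 1-partition matroid on `S` given by a
partition `{P i}_{i : ι}` (with `n = |ι|` parts) and `M₂` any matroid on `S`.  Add dummy
elements `d_i = Sum.inr i` for `i ∈ A`; let `M'₁` be the 1-partition matroid on
`S' = S ∪ D` with parts `P' i = P i + d_i` for `i ∈ A` and `P' i = P i` otherwise, and let
`M'₂` be the `n`-truncation of the direct sum of `M₂` and the free matroid on `D`
(so `X` is independent in `M'₂` iff `|X| ≤ n`, its `S`-part is independent in `M₂`, and its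
dummies lie in `D`).  If every common base has exactly one element in each part `P' i` with
`i ∉ A`, then `I ↦ I ∪ {d_i : i ∈ A, I ∩ P i = ∅}` is a bijection between
`{ I ∈ 𝓘₁ ∩ 𝓘₂ : |I ∩ P i| = 1 for i ∉ A }` and the size-`n` common bases of `M'₁, M'₂`,
with inverse `B ↦ B ∩ S`. -/
theorem stmt_16 {α ι : Type*} [Fintype α] [DecidableEq α] [Fintype ι] [DecidableEq ι]
    (P : ι → Finset α)
    (hdisj : Pairwise fun i j => Disjoint (P i) (P j))
    (hcover : ∀ u : α, ∃ i, u ∈ P i)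
    (Indep2 : Finset α → Prop)
    (h_ne : ∃ I, Indep2 I)
    (h_down : ∀ I I' : Finset α, Indep2 I → I' ⊆ I → Indep2 I')
    (h_aug : ∀ I I' : Finset α, Indep2 I → Indep2 I' → I'.card < I.card →
      ∃ x ∈ I \ I', Indep2 (insert x I'))
    (A : Finset ι)
    -- the parts of the extended 1-partition matroid M'₁:
    (P' : ι → Finset (α ⊕ ι))
    (hP' : ∀ i, P' i = (P i).image Sum.inl ∪ (if i ∈ A then {Sum.inr i} else ∅))
    -- M'₂ : the n-truncation of the direct sum of M₂ and the free matroid on D: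
    (Indep2' : Finset (α ⊕ ι) → Prop)
    (hInd2' : ∀ X : Finset (α ⊕ ι), Indep2' X ↔
      (X.card ≤ Fintype.card ι ∧
        Indep2 (Finset.univ.filter fun a : α => Sum.inl a ∈ X) ∧
        ∀ j : ι, Sum.inr j ∈ X → j ∈ A))
    -- the set of size-n common bases of M'₁ and M'₂:
    (CB : Set (Finset (α ⊕ ι)))
    (hCB : CB = {B : Finset (α ⊕ ι) |
      (∀ i, (B ∩ P' i).card = 1) ∧ Indep2' B ∧ B.card = Fintype.card ι})
    -- hypothesis: every part index i ∉ A has exactly one element in every common base: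
    (hA : ∀ B ∈ CB, ∀ i ∉ A, (B ∩ P' i).card = 1)
    -- the domain of the correspondence:
    (Dom : Set (Finset α))
    (hDom : Dom = {I : Finset α |
      (∀ i, (I ∩ P i).card ≤ 1) ∧ Indep2 I ∧ ∀ i ∉ A, (I ∩ P i).card = 1})
    -- the map and its inverse:
    (φ : Finset α → Finset (α ⊕ ι))
    (hφ : ∀ I, φ I = I.image Sum.inl ∪ (A.filter fun i => I ∩ P i = ∅).image Sum.inr)
    (ψ : Finset (α ⊕ ι) → Finset α)
    (hψ : ∀ B, ψ B = Finset.univ.filter fun a : α => Sum.inl a ∈ B) :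
    (∀ I ∈ Dom, φ I ∈ CB) ∧ (∀ B ∈ CB, ψ B ∈ Dom) ∧
      (∀ I ∈ Dom, ψ (φ I) = I) ∧ (∀ B ∈ CB, φ (ψ B) = B) := by
  subst hCB hDom
  have huniq : ∀ (a : α) i j, a ∈ P i → a ∈ P j → i = j := by
    intro a i j hi hj
    by_contra h
    exact Finset.disjoint_left.mp (hdisj h) hi hj
  have hP'l : ∀ i a, Sum.inl a ∈ P' i ↔ a ∈ P i := by
    intro i a; rw [hP']; by_cases h : i ∈ A <;> simp [h]
  have hP'r : ∀ i j, Sum.inr j ∈ P' i ↔ i ∈ A ∧ j = i := by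
    intro i j; rw [hP']; by_cases h : i ∈ A <;> simp [h]
  have hφl : ∀ (I : Finset α) a, Sum.inl a ∈ φ I ↔ a ∈ I := by
    intro I a; rw [hφ]; simp
  have hφr : ∀ (I : Finset α) j, Sum.inr j ∈ φ I ↔ j ∈ A ∧ I ∩ P j = ∅ := by
    intro I j; rw [hφ]; simp
  have hψm : ∀ (B : Finset (α ⊕ ι)) a, a ∈ ψ B ↔ Sum.inl a ∈ B := by
    intro B a; rw [hψ]; simp
  have hP'disj : ∀ i j, i ≠ j → Disjoint (P' i) (P' j) := by
    intro i j hij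
    rw [Finset.disjoint_left]
    rintro (a | k) hi hj
    · exact hij (huniq a i j ((hP'l i a).mp hi) ((hP'l j a).mp hj))
    · obtain ⟨_, h1⟩ := (hP'r i k).mp hi
      obtain ⟨_, h2⟩ := (hP'r j k).mp hj
      exact hij (h1.symm.trans h2)
  -- Claim A
  have keyA : ∀ I : Finset α, (∀ i, (I ∩ P i).card ≤ 1) → Indep2 I →
      (∀ i ∉ A, (I ∩ P i).card = 1) →
      (∀ i, (φ I ∩ P' i).card = 1) ∧ Indep2' (φ I) ∧ (φ I).card = Fintype.card ι := by
    intro I h1 h2 h3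
    have hnonA : ∀ i, I ∩ P i = ∅ → i ∈ A := by
      intro i hi
      by_contra h
      have := h3 i h
      rw [hi] at this; simp at this
    have hpart : ∀ i, (φ I ∩ P' i).card = 1 := by
      intro i
      by_cases hie : I ∩ P i = ∅
      · have hiA := hnonA i hie
        have heq : φ I ∩ P' i = {Sum.inr i} := by
          ext x
          rcases x with a | j
          · simp only [Finset.mem_inter, hφl, hP'l, Finset.mem_singleton]
            constructor
            · rintro ⟨ha, hpa⟩
              exact absurd (Finset.mem_inter.mpr ⟨ha, hpa⟩) (by simp [hie])
            · rintro ⟨⟩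
          · simp only [Finset.mem_inter, hφr, hP'r, Finset.mem_singleton, Sum.inr.injEq]
            constructor
            · rintro ⟨_, _, h⟩
              exact h
            · rintro rfl
              exact ⟨⟨hiA, hie⟩, hiA, rfl⟩
        rw [heq]; simp
      · have hne : (I ∩ P i).Nonempty := Finset.nonempty_iff_ne_empty.mpr hie
        obtain ⟨a, ha⟩ := Finset.card_eq_one.mp (le_antisymm (h1 i) (Finset.card_pos.mpr hne))
        have heq : φ I ∩ P' i = {Sum.inl a} := by
          ext x
          rcases x with b | j
          · simp only [Finset.mem_inter, hφl, hP'l, Finset.mem_singleton, Sum.inl.injEq]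
            have := Finset.ext_iff.mp ha b
            simpa only [Finset.mem_inter, Finset.mem_singleton] using this
          · simp only [Finset.mem_inter, hφr, hP'r, Finset.mem_singleton]
            constructor
            · rintro ⟨⟨_, hjE⟩, _, rfl⟩
              exact absurd hjE hie
            · rintro ⟨⟩
        rw [heq]; simp
    have hcov : ∀ x ∈ φ I, ∃ i, x ∈ P' i := by
      rintro (a | j) hx
      · obtain ⟨i, hi⟩ := hcover a
        exact ⟨i, (hP'l i a).mpr hi⟩
      · obtain ⟨hjA, _⟩ := (hφr I j).mp hx
        exact ⟨j, (hP'r j j).mpr ⟨hjA, rfl⟩⟩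
    have hcard : (φ I).card = Fintype.card ι := by
      rw [card_eq_sum_parts16 P' hP'disj _ hcov]
      simp [hpart, Finset.card_univ]
    refine ⟨hpart, ?_, hcard⟩
    rw [hInd2']
    refine ⟨hcard.le, ?_, fun j hj => ((hφr I j).mp hj).1⟩
    have hfil : (Finset.univ.filter fun a : α => Sum.inl a ∈ φ I) = I := by
      ext a; simp [hφl]
    rw [hfil]; exact h2
  refine ⟨?_, ?_, ?_, ?_⟩
  · rintro I ⟨h1, h2, h3⟩
    exact keyA I h1 h2 h3
  · rintro B ⟨hB1, hB2, hB3⟩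
    obtain ⟨_, hBi, hBd⟩ := (hInd2' B).mp hB2
    have hle : ∀ i, (ψ B ∩ P i).card ≤ 1 := by
      intro i
      have hsub : (ψ B ∩ P i).image Sum.inl ⊆ B ∩ P' i := by
        intro x hx
        obtain ⟨a, ha, rfl⟩ := Finset.mem_image.mp hx
        obtain ⟨ha1, ha2⟩ := Finset.mem_inter.mp ha
        exact Finset.mem_inter.mpr ⟨(hψm B a).mp ha1, (hP'l i a).mpr ha2⟩
      calc (ψ B ∩ P i).card = ((ψ B ∩ P i).image Sum.inl).card :=
            (Finset.card_image_of_injective _ Sum.inl_injective).symm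
        _ ≤ (B ∩ P' i).card := Finset.card_le_card hsub
        _ = 1 := hB1 i
    refine ⟨hle, ?_, ?_⟩
    · rw [hψ]; exact hBi
    · intro i hiA
      obtain ⟨x, hx⟩ := Finset.card_eq_one.mp (hB1 i)
      have hxm : x ∈ B ∩ P' i := hx ▸ Finset.mem_singleton_self x
      obtain ⟨hxB, hxP⟩ := Finset.mem_inter.mp hxm
      rcases x with a | k
      · have haP := (hP'l i a).mp hxP
        have : a ∈ ψ B ∩ P i := Finset.mem_inter.mpr ⟨(hψm B a).mpr hxB, haP⟩
        have hpos : 0 < (ψ B ∩ P i).card := Finset.card_pos.mpr ⟨a, this⟩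
        exact le_antisymm (hle i) hpos
      · exact absurd ((hP'r i k).mp hxP).1 hiA
  · rintro I ⟨h1, h2, h3⟩
    ext a
    rw [hψm, hφl]
  · rintro B ⟨hB1, hB2, hB3⟩
    obtain ⟨_, hBi, hBd⟩ := (hInd2' B).mp hB2
    ext x
    rcases x with a | j
    · rw [hφl, hψm]
    · rw [hφr]
      constructor
      · rintro ⟨hjA, hjE⟩
        obtain ⟨x, hx⟩ := Finset.card_eq_one.mp (hB1 j)
        have hxm : x ∈ B ∩ P' j := hx ▸ Finset.mem_singleton_self x
        obtain ⟨hxB, hxP⟩ := Finset.mem_inter.mp hxm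
        rcases x with a | k
        · have haP := (hP'l j a).mp hxP
          have : a ∈ ψ B ∩ P j := Finset.mem_inter.mpr ⟨(hψm B a).mpr hxB, haP⟩
          rw [hjE] at this
          exact absurd this (Finset.notMem_empty a)
        · obtain ⟨_, rfl⟩ := (hP'r j k).mp hxP
          exact hxB
      · intro hjB
        have hjA := hBd j hjB
        refine ⟨hjA, ?_⟩
        rw [Finset.eq_empty_iff_forall_notMem]
        intro a ha
        obtain ⟨ha1, ha2⟩ := Finset.mem_inter.mp ha
        have h1 : Sum.inl a ∈ B ∩ P' j :=
          Finset.mem_inter.mpr ⟨(hψm B a).mp ha1, (hP'l j a).mpr ha2⟩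
        have h2 : (Sum.inr j : α ⊕ ι) ∈ B ∩ P' j :=
          Finset.mem_inter.mpr ⟨hjB, (hP'r j j).mpr ⟨hjA, rfl⟩⟩
        obtain ⟨x, hx⟩ := Finset.card_eq_one.mp (hB1 j)
        rw [hx, Finset.mem_singleton] at h1 h2
        exact absurd (h1.trans h2.symm) (by simp)
end
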